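/- arXiv:2111.10224 — 3 statements merged into one kernel-verified Lean document; each statement's English description precedes it below -/
import Mathlib

section
/- Let σ : Z^n × T^n → C be smooth in x. Then σ ∈ M^m_{ρ,Λ} (i.e., k^γ Δ_k^γ σ(k,x) ∈ S^m_{ρ,Λ} for all γ ∈ {0,1}^n) if and only if for every multi-index α ∈ N_0^n and every γ ∈ {0,1}^n, k^γ Δ_k^{α+γ} σ(k,x) ∈ S^{m−ρ|α|}_{ρ,Λ}. -/
open scoped BigOperators
open MeasureTheory

noncomputable section

variable {n : ℕ}

/-- Forward difference in direction `j`. -/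
def fdiff {M : Type*} [AddCommGroup M] (j : Fin n) (f : (Fin n → ℤ) → M) : (Fin n → ℤ) → M :=
  fun k => f (fun i => k i + if i = j then 1 else 0) - f k

/-- Backward difference in direction `j`. -/
def bdiff {M : Type*} [AddCommGroup M] (j : Fin n) (f : (Fin n → ℤ) → M) : (Fin n → ℤ) → M :=
  fun k => f k - f (fun i => k i - if i = j then 1 else 0)

/-- Iterated forward difference for a multi-index `α`. -/
def fdiffM {M : Type*} [AddCommGroup M] (α : Fin n → ℕ) (f : (Fin n → ℤ) → M) : (Fin n → ℤ) → M :=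
  ((List.finRange n).map (fun j => (fdiff j)^[α j])).foldr (· ∘ ·) id f

/-- Iterated backward difference for a multi-index `α`. -/
def bdiffM {M : Type*} [AddCommGroup M] (α : Fin n → ℕ) (f : (Fin n → ℤ) → M) : (Fin n → ℤ) → M :=
  ((List.finRange n).map (fun j => (bdiff j)^[α j])).foldr (· ∘ ·) id f

/-- Multi-index binomial coefficient. -/
def mchoose (α β : Fin n → ℕ) : ℕ := ∏ j, Nat.choose (α j) (β j)

/-- Length of a multi-index. -/
def mlen (α : Fin n → ℕ) : ℕ := ∑ j, α j

/-- Shift a lattice point by a multi-index. -/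
def kadd (k : Fin n → ℤ) (β : Fin n → ℕ) : Fin n → ℤ := fun i => k i + (β i : ℤ)

/-- Euclidean norm of a lattice point. -/
def znorm (k : Fin n → ℤ) : ℝ := Real.sqrt (∑ j, ((k j : ℝ)) ^ 2)

/-- Partial derivative in direction `j` for functions on `ℝⁿ` (representing `𝕋ⁿ`). -/
def pderiv' (j : Fin n) (g : (Fin n → ℝ) → ℂ) : (Fin n → ℝ) → ℂ :=
  fun x => deriv (fun t => g (Function.update x j t)) (x j)

/-- The operator `D_{x_j} = (1/2πi) ∂_{x_j}`. -/
def DOne (j : Fin n) (g : (Fin n → ℝ) → ℂ) : (Fin n → ℝ) → ℂ :=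
  fun x => (1 / (2 * Real.pi * Complex.I)) * pderiv' j g x

/-- The shifted iterated derivative `D_{x_j}^{(ℓ)} = (D_{x_j} - (ℓ-1)) ⋯ (D_{x_j} - 1) D_{x_j}`. -/
def DShift (j : Fin n) : ℕ → ((Fin n → ℝ) → ℂ) → ((Fin n → ℝ) → ℂ)
  | 0 => id
  | (ℓ + 1) => fun g x => DOne j (DShift j ℓ g) x - (ℓ : ℂ) * DShift j ℓ g x

/-- Multi-index version `D_x^{(β)}`. -/
def DM (β : Fin n → ℕ) (g : (Fin n → ℝ) → ℂ) : (Fin n → ℝ) → ℂ :=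
  ((List.finRange n).map (fun j => DShift j (β j))).foldr (· ∘ ·) id g

/-- A weight function `Λ` on `ℤⁿ` with exponents `μ0 ≤ μ1 ≤ μ`. -/
structure IsWeight (Λ : (Fin n → ℤ) → ℝ) (μ0 μ1 μ : ℝ) : Prop where
  pos : ∀ k, 0 < Λ k
  exp0 : 0 < μ0
  exp01 : μ0 ≤ μ1
  exp1 : μ1 ≤ μ
  lower : ∃ C0 > 0, ∀ k, C0 * (1 + znorm k) ^ μ0 ≤ Λ k
  upper : ∃ C1 > 0, ∀ k, Λ k ≤ C1 * (1 + znorm k) ^ μ1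
  diffBound : ∀ α γ : Fin n → ℕ, (∀ j, γ j ≤ 1) →
    ∃ C > 0, ∀ k, |(∏ j, (k j : ℝ) ^ γ j) * fdiffM (α + γ) Λ k| ≤
      C * Λ k ^ (1 - (mlen α : ℝ) / μ)

/-- `D_x^{(β)} Δ_k^{α} σ` evaluated at `(k, x)`. -/
def symbDiff (σ : (Fin n → ℤ) → (Fin n → ℝ) → ℂ) (α β : Fin n → ℕ)
    (k : Fin n → ℤ) (x : Fin n → ℝ) : ℂ :=
  DM β (fun y => fdiffM α (fun k' => σ k' y) k) x

/-- `k^γ` as a complex number. -/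
def kpow (k : Fin n → ℤ) (γ : Fin n → ℕ) : ℂ := ∏ j, (k j : ℂ) ^ γ j

/-- The weighted symbol class `S^m_{ρ,Λ}(ℤⁿ × 𝕋ⁿ)`. -/
def InS (Λ : (Fin n → ℤ) → ℝ) (ρ m : ℝ) (σ : (Fin n → ℤ) → (Fin n → ℝ) → ℂ) : Prop :=
  (∀ k, ContDiff ℝ (⊤ : ℕ∞) (σ k)) ∧
  ∀ α β : Fin n → ℕ, ∃ C > 0, ∀ k x,
    ‖symbDiff σ α β k x‖ ≤ C * Λ k ^ (m - ρ * (mlen α : ℝ))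

/-- The weighted symbol class `M^m_{ρ,Λ}(ℤⁿ × 𝕋ⁿ)`:
`k^γ Δ_k^γ σ ∈ S^m_{ρ,Λ}` for all `γ ∈ {0,1}ⁿ`. -/
def InM (Λ : (Fin n → ℤ) → ℝ) (ρ m : ℝ) (σ : (Fin n → ℤ) → (Fin n → ℝ) → ℂ) : Prop :=
  ∀ γ : Fin n → ℕ, (∀ j, γ j ≤ 1) →
    InS Λ ρ m (fun k x => kpow k γ * fdiffM γ (fun k' => σ k' x) k)

/-- `M`-ellipticity of a symbol of order `m`. -/
def MElliptic (Λ : (Fin n → ℤ) → ℝ) (m : ℝ) (σ : (Fin n → ℤ) → (Fin n → ℝ) → ℂ) : Prop :=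
  ∃ C > 0, ∃ R > 0, ∀ k x, R ≤ znorm k → C * Λ k ^ m ≤ ‖σ k x‖

/-- `e^{2πit}`. -/
def e2 (t : ℝ) : ℂ := Complex.exp (2 * Real.pi * Complex.I * t)

/-- `k · x`. -/
def dotp (k : Fin n → ℤ) (x : Fin n → ℝ) : ℝ := ∑ j, (k j : ℝ) * x j

/-- The fundamental domain `[0,1]ⁿ` of the torus. -/
def torus (n : ℕ) : Set (Fin n → ℝ) := Set.univ.pi fun _ => Set.Icc 0 1

/-- Discrete Fourier transform. -/
def dft (f : (Fin n → ℤ) → ℂ) (x : Fin n → ℝ) : ℂ := ∑' k, e2 (-(dotp k x)) * f k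

/-- The pseudo-differential operator with symbol `σ`. -/
def psiOp (σ : (Fin n → ℤ) → (Fin n → ℝ) → ℂ) (f : (Fin n → ℤ) → ℂ) : (Fin n → ℤ) → ℂ :=
  fun k => ∫ x in torus n, e2 (dotp k x) * σ k x * dft f x

/-- `ℓ²`-norm (as a tsum expression). -/
def l2norm (f : (Fin n → ℤ) → ℂ) : ℝ := (∑' k, ‖f k‖ ^ 2) ^ (1 / 2 : ℝ)

/-- The Fourier multiplier `Λ(D)^s`, acting diagonally. -/
def lamD (Λ : (Fin n → ℤ) → ℝ) (s : ℝ) (w : (Fin n → ℤ) → ℂ) : (Fin n → ℤ) → ℂ :=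
  fun k => (Λ k ^ s : ℝ) * w k

/-- Membership in the weighted Sobolev space `H^{s,2}_Λ(ℤⁿ)`. -/
def InSob (Λ : (Fin n → ℤ) → ℝ) (s : ℝ) (w : (Fin n → ℤ) → ℂ) : Prop :=
  Memℓp (lamD Λ s w) 2

/-- Sobolev norm `‖w‖_{s,2,Λ}`. -/
def sobNorm (Λ : (Fin n → ℤ) → ℝ) (s : ℝ) (w : (Fin n → ℤ) → ℂ) : ℝ :=
  l2norm (lamD Λ s w)

/-- Rapid decay (Schwartz class) on `ℤⁿ`. -/
def RapidDecay (f : (Fin n → ℤ) → ℂ) : Prop :=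
  ∀ N : ℕ, ∃ C > 0, ∀ k, ‖f k‖ ≤ C * (1 + znorm k) ^ (-(N : ℝ))

/-- Falling factorial `m^{(ℓ)}`. -/
def ffac (m : ℤ) : ℕ → ℤ
  | 0 => 1
  | (ℓ + 1) => ffac m ℓ * (m - ℓ)

end
noncomputable section AuxComb
namespace MAux
variable {n : ℕ}

lemma kadd_zero (k : Fin n → ℤ) : kadd k 0 = k := by
  funext i; simp [kadd]

lemma kadd_add (k : Fin n → ℤ) (a b : Fin n → ℕ) : kadd (kadd k a) b = kadd k (a + b) := by
  funext i; simp [kadd]; push_cast; ring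

lemma fdiff_apply {M : Type*} [AddCommGroup M] (j : Fin n) (f : (Fin n → ℤ) → M) (k : Fin n → ℤ) :
    fdiff j f k = f (kadd k (Pi.single j 1)) - f k := by
  have h : (fun i => k i + if i = j then 1 else 0) = kadd k (Pi.single j 1) := by
    funext i
    simp only [kadd, Pi.single_apply]
    split <;> simp
  rw [fdiff, h]

lemma fdiff_comm {M : Type*} [AddCommGroup M] (i j : Fin n) (f : (Fin n → ℤ) → M) :
    fdiff i (fdiff j f) = fdiff j (fdiff i f) := by
  funext k
  simp only [fdiff_apply, kadd_add]
  rw [add_comm (Pi.single i 1) (Pi.single j 1)]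
  abel

/-- helper: list version of `fdiffM`. -/
def LA {M : Type*} [AddCommGroup M] (l : List (Fin n)) (α : Fin n → ℕ)
    (f : (Fin n → ℤ) → M) : (Fin n → ℤ) → M :=
  ((l.map (fun j => (fdiff j)^[α j])).foldr (· ∘ ·) id) f

lemma fdiffM_eq_LA {M : Type*} [AddCommGroup M] (α : Fin n → ℕ) (f : (Fin n → ℤ) → M) :
    fdiffM α f = LA (List.finRange n) α f := rfl

lemma LA_cons {M : Type*} [AddCommGroup M] (j : Fin n) (l : List (Fin n)) (α : Fin n → ℕ)
    (f : (Fin n → ℤ) → M) : LA (j :: l) α f = (fdiff j)^[α j] (LA l α f) := rfl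

lemma iter_comm {M : Type*} [AddCommGroup M]
    {T U : ((Fin n → ℤ) → M) → ((Fin n → ℤ) → M)}
    (h : ∀ f, T (U f) = U (T f)) : ∀ m f, T (U^[m] f) = U^[m] (T f) := by
  intro m
  induction m with
  | zero => intro f; rfl
  | succ m ih =>
    intro f
    rw [Function.iterate_succ_apply, Function.iterate_succ_apply, ih, h]

lemma LA_comm_op {M : Type*} [AddCommGroup M]
    (T : ((Fin n → ℤ) → M) → ((Fin n → ℤ) → M)) (l : List (Fin n)) (α : Fin n → ℕ)
    (hT : ∀ j ∈ l, α j ≠ 0 → ∀ f, T (fdiff j f) = fdiff j (T f)) :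
    ∀ f, T (LA l α f) = LA l α (T f) := by
  induction l with
  | nil => intro f; rfl
  | cons j l ih =>
    intro f
    rw [LA_cons, LA_cons]
    by_cases hj : α j = 0
    · rw [hj]
      simpa using ih (fun i hi h0 => hT i (List.mem_cons_of_mem _ hi) h0) f
    · rw [iter_comm (hT j List.mem_cons_self hj) (α j) (LA l α f),
        ih (fun i hi h0 => hT i (List.mem_cons_of_mem _ hi) h0) f]

lemma LA_congr {M : Type*} [AddCommGroup M] (l : List (Fin n)) {α α' : Fin n → ℕ}
    (h : ∀ j ∈ l, α j = α' j) (f : (Fin n → ℤ) → M) : LA l α f = LA l α' f := by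
  induction l with
  | nil => rfl
  | cons j l ih =>
    rw [LA_cons, LA_cons, h j List.mem_cons_self,
      ih (fun i hi => h i (List.mem_cons_of_mem _ hi))]

lemma LA_zero {M : Type*} [AddCommGroup M] (l : List (Fin n)) (f : (Fin n → ℤ) → M) :
    LA l (0 : Fin n → ℕ) f = f := by
  induction l with
  | nil => rfl
  | cons j l ih => rw [LA_cons]; simpa using ih

lemma fdiffM_zero {M : Type*} [AddCommGroup M] (f : (Fin n → ℤ) → M) :
    fdiffM (0 : Fin n → ℕ) f = f := LA_zero _ f

lemma fdiff_LA_comm {M : Type*} [AddCommGroup M] (j : Fin n) (l : List (Fin n)) (α : Fin n → ℕ)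
    (f : (Fin n → ℤ) → M) : fdiff j (LA l α f) = LA l α (fdiff j f) :=
  LA_comm_op (fdiff j) l α (fun i _ _ g => fdiff_comm j i g) f

lemma LA_add_single {M : Type*} [AddCommGroup M] (l : List (Fin n)) (j : Fin n)
    (hj : j ∈ l) (hnd : l.Nodup) (α : Fin n → ℕ) (f : (Fin n → ℤ) → M) :
    LA l (α + Pi.single j 1) f = fdiff j (LA l α f) := by
  induction l with
  | nil => simp at hj
  | cons i l ih =>
    rcases List.nodup_cons.1 hnd with ⟨hi, hnd'⟩
    rw [LA_cons, LA_cons]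
    rcases List.mem_cons.1 hj with h | h
    · subst h
      have h1 : LA l (α + Pi.single j 1) f = LA l α f :=
        LA_congr l (fun i hi' => by
          have : i ≠ j := fun he => hi (he ▸ hi')
          simp [Pi.single_apply, this]) f
      rw [h1]
      have h2 : (α + Pi.single j 1 : Fin n → ℕ) j = α j + 1 := by simp
      rw [h2, Function.iterate_succ_apply']
    · have h2 : (α + Pi.single j 1 : Fin n → ℕ) i = α i := by
        have : i ≠ j := fun he => by
          subst he; exact hi h
        simp [Pi.single_apply, this]
      rw [h2, ih h hnd', iter_comm (fun g => fdiff_comm _ _ g) (α i) (LA l α f)]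

lemma fdiffM_add_single {M : Type*} [AddCommGroup M] (α : Fin n → ℕ) (j : Fin n)
    (f : (Fin n → ℤ) → M) : fdiffM (α + Pi.single j 1) f = fdiff j (fdiffM α f) :=
  LA_add_single _ j (List.mem_finRange j) (List.nodup_finRange n) α f

lemma fdiffM_fdiff {M : Type*} [AddCommGroup M] (α : Fin n → ℕ) (j : Fin n)
    (f : (Fin n → ℤ) → M) : fdiff j (fdiffM α f) = fdiffM α (fdiff j f) :=
  fdiff_LA_comm j _ α f

/-- multi-index induction. -/
lemma mind (P : (Fin n → ℕ) → Prop) (h0 : P 0)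
    (hs : ∀ α (j : Fin n), P α → P (α + Pi.single j 1)) : ∀ α, P α := by
  intro α
  generalize hN : mlen α = N
  induction N generalizing α with
  | zero =>
    have : α = 0 := by
      funext i
      have := (Finset.sum_eq_zero_iff.1 hN) i (Finset.mem_univ i)
      simpa using this
    exact this ▸ h0
  | succ N ih =>
    have hex : ∃ j, α j ≠ 0 := by
      by_contra hc
      push_neg at hc
      have : α = 0 := funext fun i => hc i
      rw [this] at hN
      simp [mlen] at hN
    obtain ⟨j, hj⟩ := hex
    set α' := Function.update α j (α j - 1) with hα'
    have hup : α = α' + Pi.single j 1 := by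
      funext i
      by_cases h : i = j
      · subst h; simp [hα', Function.update_self]; omega
      · simp [hα', Function.update_of_ne h, Pi.single_apply, h]
    have hml : mlen α' = N := by
      have h1 : mlen α = mlen α' + 1 := by
        rw [hup]
        simp only [mlen, Pi.add_apply]
        rw [Finset.sum_add_distrib]
        congr 1
        simp [Pi.single_apply]
      omega
    rw [hup]
    exact hs α' j (ih α' hml)

lemma mlen_add (a b : Fin n → ℕ) : mlen (a + b) = mlen a + mlen b := by
  simp [mlen, Finset.sum_add_distrib]

lemma single_succ (j : Fin n) (a : ℕ) :
    (Pi.single j (a+1) : Fin n → ℕ) = Pi.single j a + Pi.single j 1 := by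
  funext i
  by_cases h : i = j
  · subst h; simp
  · simp [Pi.single_apply, h]

lemma fdiffM_single {M : Type*} [AddCommGroup M] (j : Fin n) (a : ℕ) (f : (Fin n → ℤ) → M) :
    fdiffM (Pi.single j a) f = (fdiff j)^[a] f := by
  induction a with
  | zero => simpa using fdiffM_zero f
  | succ a ih =>
    rw [single_succ, fdiffM_add_single, ih, Function.iterate_succ_apply']

lemma fdiffM_add {M : Type*} [AddCommGroup M] (α β : Fin n → ℕ) (f : (Fin n → ℤ) → M) :
    fdiffM (α + β) f = fdiffM α (fdiffM β f) := by
  induction β using mind with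
  | h0 => rw [add_zero, fdiffM_zero]
  | hs β j ih =>
    rw [← add_assoc, fdiffM_add_single, fdiffM_add_single, ih, fdiffM_fdiff]

end MAux
end AuxComb
noncomputable section AuxComb2
namespace MAux
variable {n : ℕ}

lemma fdiff_add_fun {M : Type*} [AddCommGroup M] (j : Fin n) (f g : (Fin n → ℤ) → M) :
    fdiff j (fun k => f k + g k) = fun k => fdiff j f k + fdiff j g k := by
  funext k; simp only [fdiff_apply]; abel

lemma fdiff_iter_add {M : Type*} [AddCommGroup M] (j : Fin n) (a : ℕ) (f g : (Fin n → ℤ) → M) :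
    (fdiff j)^[a] (fun k => f k + g k) = fun k => (fdiff j)^[a] f k + (fdiff j)^[a] g k := by
  induction a generalizing f g with
  | zero => rfl
  | succ a ih =>
    rw [Function.iterate_succ_apply, Function.iterate_succ_apply, Function.iterate_succ_apply,
      fdiff_add_fun, ih]

lemma LA_add_fun {M : Type*} [AddCommGroup M] (l : List (Fin n)) (α : Fin n → ℕ)
    (f g : (Fin n → ℤ) → M) :
    LA l α (fun k => f k + g k) = fun k => LA l α f k + LA l α g k := by
  induction l generalizing f g with
  | nil => rfl
  | cons j l ih => rw [LA_cons, ih, fdiff_iter_add]; rfl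

lemma fdiffM_add_fun {M : Type*} [AddCommGroup M] (α : Fin n → ℕ) (f g : (Fin n → ℤ) → M) :
    fdiffM α (fun k => f k + g k) = fun k => fdiffM α f k + fdiffM α g k :=
  LA_add_fun _ α f g

lemma fdiff_smul (j : Fin n) (c : ℂ) (f : (Fin n → ℤ) → ℂ) :
    fdiff j (fun k => c * f k) = fun k => c * fdiff j f k := by
  funext k; simp only [fdiff_apply]; ring

lemma fdiffM_smul (α : Fin n → ℕ) (c : ℂ) (f : (Fin n → ℤ) → ℂ) :
    fdiffM α (fun k => c * f k) = fun k => c * fdiffM α f k := by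
  rw [fdiffM_eq_LA, fdiffM_eq_LA]
  exact (LA_comm_op (fun g k => c * g k) _ α
    (fun i _ _ g => by rw [fdiff_smul]) f).symm

lemma fdiff_shf {M : Type*} [AddCommGroup M] (j : Fin n) (δ : Fin n → ℕ) (f : (Fin n → ℤ) → M) :
    fdiff j (fun k => f (kadd k δ)) = fun k => fdiff j f (kadd k δ) := by
  funext k
  simp only [fdiff_apply, kadd_add, add_comm δ (Pi.single j 1)]

lemma fdiffM_shf {M : Type*} [AddCommGroup M] (α : Fin n → ℕ) (δ : Fin n → ℕ)
    (f : (Fin n → ℤ) → M) :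
    fdiffM α (fun k => f (kadd k δ)) = fun k => fdiffM α f (kadd k δ) := by
  rw [fdiffM_eq_LA, fdiffM_eq_LA]
  exact (LA_comm_op (fun g k => g (kadd k δ)) _ α
    (fun i _ _ g => by rw [fdiff_shf]) f).symm

lemma kadd_single_apply_ne (k : Fin n → ℤ) (j i : Fin n) (h : i ≠ j) :
    kadd k (Pi.single j 1) i = k i := by
  simp [kadd, Pi.single_apply, h]

lemma kadd_single_apply_eq (k : Fin n → ℤ) (j : Fin n) :
    kadd k (Pi.single j 1) j = k j + 1 := by
  simp [kadd]

lemma fdiffM_mulvar (α : Fin n → ℕ) (j : Fin n) (hj : α j = 0) (h : (Fin n → ℤ) → ℂ) :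
    fdiffM α (fun k => (k j : ℂ) * h k) = fun k => (k j : ℂ) * fdiffM α h k := by
  rw [fdiffM_eq_LA, fdiffM_eq_LA]
  refine (LA_comm_op (fun g k => (k j : ℂ) * g k) _ α (fun i _ hi g => ?_) h).symm
  have hij : i ≠ j := fun he => hi (he ▸ hj)
  funext k
  simp only [fdiff_apply, kadd_single_apply_ne k i j hij.symm]
  ring

lemma fdiff_mulvar (j : Fin n) (h : (Fin n → ℤ) → ℂ) :
    fdiff j (fun k' => (k' j : ℂ) * h k') =
      fun k => (k j : ℂ) * fdiff j h k + h (kadd k (Pi.single j 1)) := by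
  funext k
  simp only [fdiff_apply, kadd_single_apply_eq]
  push_cast
  ring

/-- Discrete Leibniz for multiplication by the variable (1-D). -/
lemma stepA (j : Fin n) (a : ℕ) (h : (Fin n → ℤ) → ℂ) (k : Fin n → ℤ) :
    (fdiff j)^[a] (fun k' => (k' j : ℂ) * h k') k
      = (k j : ℂ) * (fdiff j)^[a] h k
        + (a : ℂ) * (fdiff j)^[a - 1] h (kadd k (Pi.single j 1)) := by
  induction a generalizing h k with
  | zero => simp
  | succ a ih =>
    have e1 : (fdiff j)^[a + 1] (fun k' => (k' j : ℂ) * h k') k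
        = (fdiff j)^[a] (fun k' => (k' j : ℂ) * fdiff j h k') k
          + (fdiff j)^[a] (fun k' => h (kadd k' (Pi.single j 1))) k := by
      rw [Function.iterate_succ_apply, fdiff_mulvar]
      exact congrFun (fdiff_iter_add j a _ _) k
    rw [e1, ih (fdiff j h) k]
    have h1 : (fdiff j)^[a] (fdiff j h) = (fdiff j)^[a + 1] h :=
      (Function.iterate_succ_apply (fdiff j) a h).symm
    have h2 : (a : ℂ) * (fdiff j)^[a - 1] (fdiff j h) (kadd k (Pi.single j 1))
        = (a : ℂ) * (fdiff j)^[a] h (kadd k (Pi.single j 1)) := by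
      cases a with
      | zero => simp
      | succ b => congr 2
    have h3 : (fdiff j)^[a] (fun k' => h (kadd k' (Pi.single j 1))) k
        = (fdiff j)^[a] h (kadd k (Pi.single j 1)) := by
      have := fdiffM_shf (M := ℂ) (Pi.single j a) (Pi.single j 1) h
      rw [fdiffM_single, fdiffM_single] at this
      exact congrFun this k
    rw [h1, h2, h3]
    push_cast
    ring

/-- inversion: variable times a `(b+1)`-st difference. -/
lemma stepB (j : Fin n) (b : ℕ) (h : (Fin n → ℤ) → ℂ) (k : Fin n → ℤ) :
    (k j : ℂ) * (fdiff j)^[b + 1] h k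
      = (fdiff j)^[b] (fun k' => (k' j : ℂ) * fdiff j h k') k
        - (b : ℂ) * (fdiff j)^[b] h (kadd k (Pi.single j 1)) := by
  have hA := stepA j b (fdiff j h) k
  have h1 : (fdiff j)^[b] (fdiff j h) = (fdiff j)^[b + 1] h :=
    (Function.iterate_succ_apply (fdiff j) b h).symm
  have h2 : (b : ℂ) * (fdiff j)^[b - 1] (fdiff j h) (kadd k (Pi.single j 1))
      = (b : ℂ) * (fdiff j)^[b] h (kadd k (Pi.single j 1)) := by
    cases b with
    | zero => simp
    | succ c => congr 2
  rw [h1, h2] at hA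
  rw [hA]
  ring

lemma kpow_zero (k : Fin n → ℤ) : kpow k 0 = 1 := by simp [kpow]

lemma kpow_add (k : Fin n → ℤ) (a b : Fin n → ℕ) : kpow k (a + b) = kpow k a * kpow k b := by
  simp [kpow, pow_add, Finset.prod_mul_distrib]

lemma kpow_single (k : Fin n → ℤ) (j : Fin n) : kpow k (Pi.single j 1) = (k j : ℂ) := by
  rw [kpow]
  rw [Fintype.prod_eq_single j (fun i hij => by simp [Pi.single_apply, hij])]
  simp

lemma kpow_kadd_single (k : Fin n → ℤ) (j : Fin n) {η : Fin n → ℕ} (hη : η j = 0) :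
    kpow (kadd k (Pi.single j 1)) η = kpow k η := by
  rw [kpow, kpow]
  refine Finset.prod_congr rfl (fun i _ => ?_)
  by_cases h : i = j
  · subst h; simp [hη]
  · rw [kadd_single_apply_ne k j i h]

/-- the building block `k^η Δ^η f`. -/
def Tk (η : Fin n → ℕ) (f : (Fin n → ℤ) → ℂ) : (Fin n → ℤ) → ℂ :=
  fun k => kpow k η * fdiffM η f k

lemma fdiff_kpow (j : Fin n) {η : Fin n → ℕ} (hη : η j = 0) (g : (Fin n → ℤ) → ℂ) :
    fdiff j (fun k => kpow k η * g k) = fun k => kpow k η * fdiff j g k := by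
  funext k
  simp only [fdiff_apply, kpow_kadd_single k j hη]
  ring

lemma T_step (j : Fin n) {η : Fin n → ℕ} (hη : η j = 0) (f : (Fin n → ℤ) → ℂ) :
    (fun k => (k j : ℂ) * fdiff j (Tk η f) k) = Tk (η + Pi.single j 1) f := by
  funext k
  have h1 : fdiff j (Tk η f) = fun k => kpow k η * fdiff j (fdiffM η f) k :=
    fdiff_kpow j hη (fdiffM η f)
  rw [h1]
  simp only [Tk, ← fdiffM_add_single, kpow_add, kpow_single]
  ring

lemma update_decomp (N : Fin n → ℕ) (j : Fin n) :
    N = Function.update N j 0 + Pi.single j (N j) := by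
  funext i
  by_cases h : i = j
  · subst h; simp
  · simp [Function.update_of_ne h, Pi.single_apply, h]

lemma fdiffM_decomp {M : Type*} [AddCommGroup M] (N : Fin n → ℕ) (j : Fin n)
    (g : (Fin n → ℤ) → M) :
    fdiffM N g = (fdiff j)^[N j] (fdiffM (Function.update N j 0) g) := by
  conv_lhs => rw [update_decomp N j, add_comm, fdiffM_add, fdiffM_single]

/-- key inversion identity. -/
lemma key_inv (j : Fin n) (N η : Fin n → ℕ) (hη : η j = 0) (f : (Fin n → ℤ) → ℂ)
    (k : Fin n → ℤ) :
    (k j : ℂ) * fdiffM (N + Pi.single j 1) (Tk η f) k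
      = fdiffM N (Tk (η + Pi.single j 1) f) k
        - (N j : ℂ) * fdiffM N (Tk η f) (kadd k (Pi.single j 1)) := by
  set N0 := Function.update N j 0 with hN0
  have hN0j : N0 j = 0 := by simp [hN0]
  have hNe : (N + Pi.single j 1 : Fin n → ℕ) j = N j + 1 := by simp
  have hNeu : Function.update (N + Pi.single j 1 : Fin n → ℕ) j 0 = N0 := by
    funext i
    by_cases h : i = j
    · subst h; simp [hN0]
    · simp [hN0, Function.update_of_ne h, Pi.single_apply, h]
  have hdec : fdiffM (N + Pi.single j 1) (Tk η f)
      = (fdiff j)^[N j + 1] (fdiffM N0 (Tk η f)) := by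
    rw [fdiffM_decomp (N + Pi.single j 1) j, hNe, hNeu]
  rw [hdec, stepB]
  have hcomm : fdiff j (fdiffM N0 (Tk η f)) = fdiffM N0 (fdiff j (Tk η f)) :=
    fdiffM_fdiff N0 j (Tk η f)
  have hmul : (fun k' => (k' j : ℂ) * fdiff j (fdiffM N0 (Tk η f)) k')
      = fdiffM N0 (fun k' => (k' j : ℂ) * fdiff j (Tk η f) k') := by
    rw [hcomm, fdiffM_mulvar N0 j hN0j]
  rw [hmul, T_step j hη f]
  have h1 : (fdiff j)^[N j] (fdiffM N0 (Tk (η + Pi.single j 1) f)) k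
      = fdiffM N (Tk (η + Pi.single j 1) f) k := by
    rw [← fdiffM_decomp]
  have h2 : (fdiff j)^[N j] (fdiffM N0 (Tk η f)) (kadd k (Pi.single j 1))
      = fdiffM N (Tk η f) (kadd k (Pi.single j 1)) := by
    rw [← fdiffM_decomp]
  rw [h1, h2]

end MAux
end AuxComb2
section AuxRep
namespace MAux
variable {n : ℕ}

/-- Operators representable as integer combinations of shifted `Δ^N (k^η Δ^η ·)`. -/
inductive Rep (γ N : Fin n → ℕ) : (((Fin n → ℤ) → ℂ) → (Fin n → ℤ) → ℂ) → Prop where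
  | basic (η δ : Fin n → ℕ) (hη : ∀ j, η j ≤ γ j) (hδ : ∀ j, δ j ≤ γ j) :
      Rep γ N (fun f k => fdiffM N (Tk η f) (kadd k δ))
  | zero : Rep γ N (fun _ _ => 0)
  | add {F G} : Rep γ N F → Rep γ N G → Rep γ N (fun f k => F f k + G f k)
  | smul (c : ℂ) {F} : Rep γ N F → Rep γ N (fun f k => c * F f k)

lemma Rep.congr {γ N : Fin n → ℕ} {F G} (h : Rep γ N G) (he : F = G) : Rep γ N F := he ▸ h

lemma Rep.shift {γ1 γ N : Fin n → ℕ} {F} (h : Rep γ1 N F) (δ0 : Fin n → ℕ)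
    (hle : ∀ j, γ1 j + δ0 j ≤ γ j) :
    Rep γ N (fun f k => F f (kadd k δ0)) := by
  induction h with
  | basic η δ hη hδ =>
    refine Rep.congr (Rep.basic η (δ0 + δ) (fun j => le_trans (hη j) ?_) (fun j => ?_)) ?_
    · exact le_trans (Nat.le_add_right _ _) (hle j)
    · calc δ0 j + δ j ≤ δ0 j + γ1 j := Nat.add_le_add_left (hδ j) _
        _ ≤ γ j := by rw [Nat.add_comm]; exact hle j
    · funext f k
      show fdiffM N (Tk η f) (kadd (kadd k δ0) δ) = _
      rw [kadd_add]
  | zero => exact Rep.zero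
  | add h1 h2 ih1 ih2 => exact Rep.add ih1 ih2
  | smul c h ih => exact Rep.smul c ih

lemma Rep.mulvar {j0 : Fin n} {γ'' N : Fin n → ℕ} (hj : γ'' j0 = 0) {F}
    (h : Rep γ'' (N + Pi.single j0 1) F) :
    Rep (γ'' + Pi.single j0 1) N (fun f k => (k j0 : ℂ) * F f k) := by
  induction h with
  | basic η δ hη hδ =>
    have hδ0 : δ j0 = 0 := Nat.le_zero.1 (hj ▸ hδ j0)
    have hη0 : η j0 = 0 := Nat.le_zero.1 (hj ▸ hη j0)
    have key : (fun (f : (Fin n → ℤ) → ℂ) (k : Fin n → ℤ) =>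
        (k j0 : ℂ) * fdiffM (N + Pi.single j0 1) (Tk η f) (kadd k δ))
        = fun f k => fdiffM N (Tk (η + Pi.single j0 1) f) (kadd k δ)
          + (-(N j0 : ℂ)) * fdiffM N (Tk η f) (kadd k (δ + Pi.single j0 1)) := by
      funext f k
      have hk : (k j0 : ℂ) = ((kadd k δ) j0 : ℂ) := by simp [kadd, hδ0]
      rw [hk, key_inv j0 N η hη0 f (kadd k δ), kadd_add]
      ring
    refine Rep.congr (Rep.add (Rep.basic (η + Pi.single j0 1) δ (fun j => ?_) (fun j => ?_))
      (Rep.smul (-(N j0 : ℂ)) (Rep.basic η (δ + Pi.single j0 1) (fun j => ?_) (fun j => ?_)))) key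
    · exact Nat.add_le_add (hη j) (le_refl _)
    · exact le_trans (hδ j) (Nat.le_add_right _ _)
    · exact le_trans (hη j) (Nat.le_add_right _ _)
    · exact Nat.add_le_add (hδ j) (le_refl _)
  | zero =>
    exact Rep.congr Rep.zero (by funext f k; simp)
  | add h1 h2 ih1 ih2 =>
    exact Rep.congr (Rep.add ih1 ih2) (by funext f k; ring)
  | smul c h ih =>
    exact Rep.congr (Rep.smul c ih) (by funext f k; ring)

/-- The main representation: `Δ^{α'} (k^γ Δ^{α+γ} f)` is representable. -/
lemma main_rep : ∀ γ : Fin n → ℕ, (∀ j, γ j ≤ 1) → ∀ α α' : Fin n → ℕ,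
    Rep γ (α + α') (fun f k => fdiffM α' (fun k' => kpow k' γ * fdiffM (α + γ) f k') k) := by
  intro γ
  generalize hN : mlen γ = N
  induction N generalizing γ with
  | zero =>
    intro _ α α'
    have hγ0 : γ = 0 := by
      funext i
      have := (Finset.sum_eq_zero_iff.1 hN) i (Finset.mem_univ i)
      simpa using this
    subst hγ0
    refine Rep.congr (Rep.basic 0 0 (fun j => le_refl _) (fun j => le_refl _)) ?_
    funext f k
    have h1 : (fun k' => kpow k' 0 * fdiffM (α + 0) f k') = fdiffM α f := by
      funext k'
      rw [kpow_zero, add_zero, one_mul]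
    rw [h1, kadd_zero]
    have h2 : Tk 0 f = f := by
      funext k'
      rw [Tk, kpow_zero, fdiffM_zero, one_mul]
    rw [h2, add_comm α α', fdiffM_add]
  | succ N ih =>
    intro hγ1 α α'
    have hex : ∃ j, γ j ≠ 0 := by
      by_contra hc
      push_neg at hc
      have : γ = 0 := funext fun i => hc i
      rw [this] at hN
      simp [mlen] at hN
    obtain ⟨j0, hj0⟩ := hex
    have hγj0 : γ j0 = 1 := le_antisymm (hγ1 j0) (Nat.one_le_iff_ne_zero.2 hj0)
    set γ'' := Function.update γ j0 0 with hγ''def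
    have hγj : γ'' j0 = 0 := by simp [hγ''def]
    have hγdec : γ = γ'' + Pi.single j0 1 := by
      funext i
      by_cases h : i = j0
      · subst h; simp [hγ''def, hγj0]
      · simp [hγ''def, Function.update_of_ne h, Pi.single_apply, h]
    have hγ''1 : ∀ j, γ'' j ≤ 1 := by
      intro j
      by_cases h : j = j0
      · subst h; simp [hγj]
      · simpa [hγ''def, Function.update_of_ne h] using hγ1 j
    have hmlen'' : mlen γ'' = N := by
      have h : mlen γ = mlen γ'' + 1 := by
        rw [hγdec, mlen_add]
        congr 1
        simp [mlen, Pi.single_apply]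
      omega
    set a := α' j0 with hadef
    set α'' := Function.update α' j0 0 with hα''def
    have hα''j : α'' j0 = 0 := by simp [hα''def]
    have hα'dec : α' = α'' + Pi.single j0 a := by
      rw [hα''def, hadef]; exact update_decomp α' j0
    set G' : ((Fin n → ℤ) → ℂ) → (Fin n → ℤ) → ℂ :=
      fun f k' => kpow k' γ'' * fdiffM ((α + Pi.single j0 1) + γ'') f k' with hG'def
    have hsplit : ∀ f k, fdiffM α' (fun k' => kpow k' γ * fdiffM (α + γ) f k') k
        = (k j0 : ℂ) * fdiffM α' (G' f) k
          + (a : ℂ) * fdiffM (α'' + Pi.single j0 (a - 1)) (G' f) (kadd k (Pi.single j0 1)) := by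
      intro f k
      have hinner : (fun k' => kpow k' γ * fdiffM (α + γ) f k')
          = fun k' => (k' j0 : ℂ) * G' f k' := by
        funext k'
        have h1 : kpow k' γ = (k' j0 : ℂ) * kpow k' γ'' := by
          rw [hγdec, kpow_add, kpow_single]
          ring
        have h2 : (α + γ) = (α + Pi.single j0 1) + γ'' := by
          rw [hγdec, add_comm γ'' (Pi.single j0 1), ← add_assoc]
        rw [h1, h2, hG'def]
        ring
      rw [hinner]
      have hdecα' : ∀ (g : (Fin n → ℤ) → ℂ), fdiffM α' g = fdiffM α'' ((fdiff j0)^[a] g) := by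
        intro g
        conv_lhs => rw [hα'dec]
        rw [fdiffM_add, fdiffM_single]
      rw [hdecα']
      have hstepA : (fdiff j0)^[a] (fun k' => (k' j0 : ℂ) * G' f k')
          = fun k' => (k' j0 : ℂ) * (fdiff j0)^[a] (G' f) k'
            + (a : ℂ) * (fdiff j0)^[a - 1] (G' f) (kadd k' (Pi.single j0 1)) := by
        funext k'
        exact stepA j0 a (G' f) k'
      rw [hstepA, fdiffM_add_fun]
      beta_reduce
      have ht1 : fdiffM α'' (fun k' => (k' j0 : ℂ) * (fdiff j0)^[a] (G' f) k') k
          = (k j0 : ℂ) * fdiffM α' (G' f) k := by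
        rw [fdiffM_mulvar α'' j0 hα''j, hdecα']
      have ht2 : fdiffM α'' (fun k' => (a : ℂ) * (fdiff j0)^[a - 1] (G' f) (kadd k' (Pi.single j0 1))) k
          = (a : ℂ) * fdiffM (α'' + Pi.single j0 (a - 1)) (G' f) (kadd k (Pi.single j0 1)) := by
        rw [fdiffM_smul]
        beta_reduce
        have h3 : fdiffM α'' (fun k' => (fdiff j0)^[a - 1] (G' f) (kadd k' (Pi.single j0 1))) k
            = fdiffM α'' ((fdiff j0)^[a - 1] (G' f)) (kadd k (Pi.single j0 1)) :=
          congrFun (fdiffM_shf _ _ _) k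
        rw [h3, fdiffM_add, fdiffM_single]
      rw [ht1, ht2]
    have hIH1 : Rep γ'' ((α + α') + Pi.single j0 1) (fun f k => fdiffM α' (G' f) k) := by
      have h := ih γ'' hmlen'' hγ''1 (α + Pi.single j0 1) α'
      have hNe : (α + Pi.single j0 1) + α' = (α + α') + Pi.single j0 1 := by
        rw [add_right_comm]
      rw [hNe] at h
      exact h
    have hterm1 : Rep γ (α + α') (fun f k => (k j0 : ℂ) * fdiffM α' (G' f) k) := by
      have h := Rep.mulvar hγj hIH1
      rwa [← hγdec] at h
    have hterm2 : Rep γ (α + α')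
        (fun f k => (a : ℂ) * fdiffM (α'' + Pi.single j0 (a - 1)) (G' f)
          (kadd k (Pi.single j0 1))) := by
      by_cases h0 : a = 0
      · refine Rep.congr Rep.zero ?_
        funext f k
        rw [h0]
        simp
      · obtain ⟨a₁, ha1⟩ := Nat.exists_eq_succ_of_ne_zero h0
        have hIH2 : Rep γ'' (α + α')
            (fun f k => fdiffM (α'' + Pi.single j0 a₁) (G' f) k) := by
          have h := ih γ'' hmlen'' hγ''1 (α + Pi.single j0 1) (α'' + Pi.single j0 a₁)
          have hNe : (α + Pi.single j0 1) + (α'' + Pi.single j0 a₁) = α + α' := by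
            funext i
            by_cases hi : i = j0
            · subst hi
              have h1 : α' i = a := hadef.symm
              simp [hα''def, Pi.single_apply, h1, ha1]
              omega
            · simp [hα''def, Function.update_of_ne hi, Pi.single_apply, hi]
          rw [hNe] at h
          exact h
        have hle : ∀ j, γ'' j + (Pi.single j0 1 : Fin n → ℕ) j ≤ γ j := by
          intro j
          by_cases hi : j = j0
          · subst hi; simp [hγj, hγj0]
          · simp [Pi.single_apply, hi, hγ''def, Function.update_of_ne hi]
        have hsh := hIH2.shift (Pi.single j0 1) hle
        refine Rep.congr (Rep.smul (a : ℂ) hsh) ?_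
        funext f k
        have : a - 1 = a₁ := by omega
        rw [this]
    exact Rep.congr (Rep.add hterm1 hterm2) (by funext f k; exact hsplit f k)

end MAux
end AuxRep
section AuxD
namespace MAux
variable {n : ℕ}

lemma pderiv'_eq {g : (Fin n → ℝ) → ℂ} (hg : ContDiff ℝ (⊤ : ℕ∞) g) (j : Fin n) (x : Fin n → ℝ) :
    pderiv' j g x = fderiv ℝ g x (Pi.single j 1) := by
  have hupd : (fun t : ℝ => Function.update x j t)
      = fun t => x + (t - x j) • (Pi.single j 1 : Fin n → ℝ) := by
    funext t
    funext i
    by_cases h : i = j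
    · subst h; simp
    · simp [Function.update_of_ne h, Pi.single_apply, h]
  have hinner : HasDerivAt (fun t : ℝ => Function.update x j t)
      (Pi.single j 1 : Fin n → ℝ) (x j) := by
    rw [hupd]
    have h1 : HasDerivAt (fun t : ℝ => t - x j) 1 (x j) := (hasDerivAt_id _).sub_const _
    have h2 := h1.smul_const (Pi.single j 1 : Fin n → ℝ)
    simpa using h2.const_add x
  have houter : HasFDerivAt g (fderiv ℝ g x) ((fun t : ℝ => Function.update x j t) (x j)) := by
    simp only [Function.update_eq_self]
    exact (hg.differentiable (by simp) x).hasFDerivAt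
  have hcomp := houter.comp_hasDerivAt (x j) hinner
  exact hcomp.deriv

lemma pderiv'_contDiff {g : (Fin n → ℝ) → ℂ} (hg : ContDiff ℝ (⊤ : ℕ∞) g) (j : Fin n) :
    ContDiff ℝ (⊤ : ℕ∞) (pderiv' j g) := by
  have h : pderiv' j g = fun x => fderiv ℝ g x (Pi.single j 1) :=
    funext fun x => pderiv'_eq hg j x
  rw [h]
  exact (hg.fderiv_right (by simp)).clm_apply contDiff_const

lemma section_diff {g : (Fin n → ℝ) → ℂ} (hg : ContDiff ℝ (⊤ : ℕ∞) g) (x : Fin n → ℝ) (j : Fin n) :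
    DifferentiableAt ℝ (fun t : ℝ => g (Function.update x j t)) (x j) :=
  ((hg.comp (contDiff_update ((⊤ : ℕ∞) : WithTop ℕ∞) x j)).differentiable (by simp)).differentiableAt

lemma pderiv'_add {g h : (Fin n → ℝ) → ℂ} (hg : ContDiff ℝ (⊤ : ℕ∞) g) (hh : ContDiff ℝ (⊤ : ℕ∞) h)
    (j : Fin n) :
    pderiv' j (fun x => g x + h x) = fun x => pderiv' j g x + pderiv' j h x := by
  funext x
  show deriv (fun t => g (Function.update x j t) + h (Function.update x j t)) (x j) = _
  rw [deriv_fun_add (section_diff hg x j) (section_diff hh x j)]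
  rfl

lemma pderiv'_smul (c : ℂ) {g : (Fin n → ℝ) → ℂ} (hg : ContDiff ℝ (⊤ : ℕ∞) g) (j : Fin n) :
    pderiv' j (fun x => c * g x) = fun x => c * pderiv' j g x := by
  funext x
  show deriv (fun t => c * g (Function.update x j t)) (x j) = _
  rw [deriv_const_mul c (section_diff hg x j)]
  rfl

lemma pderiv'_zero (j : Fin n) : pderiv' j (fun _ => (0 : ℂ)) = fun _ => 0 := by
  funext x
  show deriv (fun _ : ℝ => (0 : ℂ)) (x j) = 0
  simp

lemma DShift_contDiff (j : Fin n) (ℓ : ℕ) {g : (Fin n → ℝ) → ℂ} (hg : ContDiff ℝ (⊤ : ℕ∞) g) :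
    ContDiff ℝ (⊤ : ℕ∞) (DShift j ℓ g) := by
  induction ℓ with
  | zero => exact hg
  | succ ℓ ih =>
    show ContDiff ℝ (⊤ : ℕ∞) (fun x => DOne j (DShift j ℓ g) x - (ℓ : ℂ) * DShift j ℓ g x)
    unfold DOne
    exact (contDiff_const.mul (pderiv'_contDiff ih j)).sub (contDiff_const.mul ih)

lemma DShift_add (j : Fin n) (ℓ : ℕ) {g h : (Fin n → ℝ) → ℂ}
    (hg : ContDiff ℝ (⊤ : ℕ∞) g) (hh : ContDiff ℝ (⊤ : ℕ∞) h) :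
    DShift j ℓ (fun x => g x + h x) = fun x => DShift j ℓ g x + DShift j ℓ h x := by
  induction ℓ with
  | zero => rfl
  | succ ℓ ih =>
    show (fun x => DOne j (DShift j ℓ (fun x => g x + h x)) x
        - (ℓ : ℂ) * DShift j ℓ (fun x => g x + h x) x) = _
    rw [ih]
    funext x
    have h1 : pderiv' j (fun x => DShift j ℓ g x + DShift j ℓ h x) x
        = pderiv' j (DShift j ℓ g) x + pderiv' j (DShift j ℓ h) x :=
      congrFun (pderiv'_add (DShift_contDiff j ℓ hg) (DShift_contDiff j ℓ hh) j) x
    show DOne j (fun x => DShift j ℓ g x + DShift j ℓ h x) x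
        - (ℓ : ℂ) * (DShift j ℓ g x + DShift j ℓ h x) = _
    unfold DOne
    rw [h1]
    show _ = (DOne j (DShift j ℓ g) x - (ℓ:ℂ) * DShift j ℓ g x)
        + (DOne j (DShift j ℓ h) x - (ℓ:ℂ) * DShift j ℓ h x)
    unfold DOne
    ring

lemma DShift_smul (j : Fin n) (ℓ : ℕ) (c : ℂ) {g : (Fin n → ℝ) → ℂ} (hg : ContDiff ℝ (⊤ : ℕ∞) g) :
    DShift j ℓ (fun x => c * g x) = fun x => c * DShift j ℓ g x := by
  induction ℓ with
  | zero => rfl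
  | succ ℓ ih =>
    show (fun x => DOne j (DShift j ℓ (fun x => c * g x)) x
        - (ℓ : ℂ) * DShift j ℓ (fun x => c * g x) x) = _
    rw [ih]
    funext x
    have h1 : pderiv' j (fun x => c * DShift j ℓ g x) x = c * pderiv' j (DShift j ℓ g) x :=
      congrFun (pderiv'_smul c (DShift_contDiff j ℓ hg) j) x
    show DOne j (fun x => c * DShift j ℓ g x) x - (ℓ : ℂ) * (c * DShift j ℓ g x) = _
    unfold DOne
    rw [h1]
    show _ = c * (DOne j (DShift j ℓ g) x - (ℓ:ℂ) * DShift j ℓ g x)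
    unfold DOne
    ring

lemma DShift_zero (j : Fin n) (ℓ : ℕ) :
    DShift j ℓ (fun _ => (0 : ℂ)) = fun _ => 0 := by
  induction ℓ with
  | zero => rfl
  | succ ℓ ih =>
    show (fun x => DOne j (DShift j ℓ (fun _ => (0:ℂ))) x
        - (ℓ : ℂ) * DShift j ℓ (fun _ => (0:ℂ)) x) = _
    rw [ih]
    funext x
    show DOne j (fun _ => (0:ℂ)) x - (ℓ : ℂ) * 0 = 0
    unfold DOne
    rw [pderiv'_zero]
    ring

/-- list version of `DM`. -/
noncomputable def DL (l : List (Fin n)) (β : Fin n → ℕ) (g : (Fin n → ℝ) → ℂ) : (Fin n → ℝ) → ℂ :=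
  ((l.map fun j => DShift j (β j)).foldr (· ∘ ·) id) g

lemma DL_cons (j : Fin n) (l : List (Fin n)) (β : Fin n → ℕ) (g : (Fin n → ℝ) → ℂ) :
    DL (j :: l) β g = DShift j (β j) (DL l β g) := rfl

lemma DL_contDiff (l : List (Fin n)) (β : Fin n → ℕ) {g : (Fin n → ℝ) → ℂ}
    (hg : ContDiff ℝ (⊤ : ℕ∞) g) : ContDiff ℝ (⊤ : ℕ∞) (DL l β g) := by
  induction l with
  | nil => exact hg
  | cons j l ih => rw [DL_cons]; exact DShift_contDiff j (β j) ih

lemma DL_add (l : List (Fin n)) (β : Fin n → ℕ) {g h : (Fin n → ℝ) → ℂ}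
    (hg : ContDiff ℝ (⊤ : ℕ∞) g) (hh : ContDiff ℝ (⊤ : ℕ∞) h) :
    DL l β (fun x => g x + h x) = fun x => DL l β g x + DL l β h x := by
  induction l with
  | nil => rfl
  | cons j l ih =>
    rw [DL_cons, ih, DShift_add j (β j) (DL_contDiff l β hg) (DL_contDiff l β hh)]
    rfl

lemma DL_smul (l : List (Fin n)) (β : Fin n → ℕ) (c : ℂ) {g : (Fin n → ℝ) → ℂ}
    (hg : ContDiff ℝ (⊤ : ℕ∞) g) :
    DL l β (fun x => c * g x) = fun x => c * DL l β g x := by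
  induction l with
  | nil => rfl
  | cons j l ih =>
    rw [DL_cons, ih, DShift_smul j (β j) c (DL_contDiff l β hg)]
    rfl

lemma DL_zero (l : List (Fin n)) (β : Fin n → ℕ) :
    DL l β (fun _ => (0 : ℂ)) = fun _ => 0 := by
  induction l with
  | nil => rfl
  | cons j l ih => rw [DL_cons, ih, DShift_zero]

lemma DM_add (β : Fin n → ℕ) {g h : (Fin n → ℝ) → ℂ} (hg : ContDiff ℝ (⊤ : ℕ∞) g)
    (hh : ContDiff ℝ (⊤ : ℕ∞) h) :
    DM β (fun x => g x + h x) = fun x => DM β g x + DM β h x := DL_add _ β hg hh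

lemma DM_smul (β : Fin n → ℕ) (c : ℂ) {g : (Fin n → ℝ) → ℂ} (hg : ContDiff ℝ (⊤ : ℕ∞) g) :
    DM β (fun x => c * g x) = fun x => c * DM β g x := DL_smul _ β c hg

lemma DM_zero (β : Fin n → ℕ) : DM β (fun _ => (0 : ℂ)) = fun _ => 0 := DL_zero _ β

lemma contDiff_fdiffM_symb (σ : (Fin n → ℤ) → (Fin n → ℝ) → ℂ)
    (hσ : ∀ k, ContDiff ℝ (⊤ : ℕ∞) (σ k)) (A : Fin n → ℕ) :
    ∀ k, ContDiff ℝ (⊤ : ℕ∞) (fun x => fdiffM A (fun k' => σ k' x) k) := by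
  induction A using mind with
  | h0 => intro k; simp only [fdiffM_zero]; exact hσ k
  | hs A j ih =>
    intro k
    have he : (fun x => fdiffM (A + Pi.single j 1) (fun k' => σ k' x) k)
        = fun x => fdiffM A (fun k' => σ k' x) (kadd k (Pi.single j 1))
          - fdiffM A (fun k' => σ k' x) k := by
      funext x
      rw [fdiffM_add_single, fdiff_apply]
    rw [he]
    exact (ih _).sub (ih k)

lemma contDiff_Tk_symb (σ : (Fin n → ℤ) → (Fin n → ℝ) → ℂ)
    (hσ : ∀ k, ContDiff ℝ (⊤ : ℕ∞) (σ k)) (η N : Fin n → ℕ) (k : Fin n → ℤ) :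
    ContDiff ℝ (⊤ : ℕ∞) (fun x => fdiffM N (Tk η (fun k' => σ k' x)) k) :=
  contDiff_fdiffM_symb (fun k'' x' => kpow k'' η * fdiffM η (fun k3 => σ k3 x') k'')
    (fun k'' => contDiff_const.mul (contDiff_fdiffM_symb σ hσ η k'')) N k

end MAux
end AuxD
section AuxW
namespace MAux
variable {n : ℕ} {Λ : (Fin n → ℤ) → ℝ} {μ0 μ1 μ : ℝ}

lemma mlen_single (j : Fin n) (a : ℕ) : mlen (Pi.single j a : Fin n → ℕ) = a := by
  simp [mlen, Pi.single_apply]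

lemma weight_mu_pos (hW : IsWeight Λ μ0 μ1 μ) : 0 < μ :=
  lt_of_lt_of_le hW.exp0 (le_trans hW.exp01 hW.exp1)

lemma weight_lower_bound (hW : IsWeight Λ μ0 μ1 μ) : ∃ c > 0, ∀ k, c ≤ Λ k := by
  obtain ⟨C0, hC0, h⟩ := hW.lower
  refine ⟨C0, hC0, fun k => ?_⟩
  have h1 : (1 : ℝ) ≤ (1 + znorm k) ^ μ0 := by
    have hz : (0:ℝ) ≤ znorm k := Real.sqrt_nonneg _
    calc (1:ℝ) = 1 ^ μ0 := (Real.one_rpow μ0).symm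
      _ ≤ (1 + znorm k) ^ μ0 := Real.rpow_le_rpow zero_le_one (by linarith) hW.exp0.le
  calc C0 = C0 * 1 := (mul_one C0).symm
    _ ≤ C0 * (1 + znorm k) ^ μ0 := mul_le_mul_of_nonneg_left h1 hC0.le
    _ ≤ Λ k := h k

lemma weight_diff (hW : IsWeight Λ μ0 μ1 μ) (j : Fin n) :
    ∃ C > 0, ∀ k, |Λ (kadd k (Pi.single j 1)) - Λ k| ≤ C * Λ k ^ (1 - 1/μ) := by
  obtain ⟨C, hC, h⟩ := hW.diffBound (Pi.single j 1) 0 (fun _ => Nat.zero_le 1)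
  refine ⟨C, hC, fun k => ?_⟩
  have h1 := h k
  have h2 : (∏ j', (k j' : ℝ) ^ ((0 : Fin n → ℕ) j')) = 1 := by simp
  have h3 : fdiffM ((Pi.single j 1 : Fin n → ℕ) + 0) Λ k
      = Λ (kadd k (Pi.single j 1)) - Λ k := by
    rw [add_zero, fdiffM_single, Function.iterate_one, fdiff_apply]
  have h4 : (mlen (Pi.single j 1 : Fin n → ℕ) : ℝ) = 1 := by rw [mlen_single]; norm_num
  rw [h2, h3, one_mul, h4] at h1
  simpa using h1

lemma rpow_one_sub_le {x c μ' : ℝ} (hc : 0 < c) (hcx : c ≤ x) (hμ : 0 < μ') :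
    x ^ (1 - 1/μ') ≤ x * (c ^ (1/μ'))⁻¹ := by
  have hx : 0 < x := lt_of_lt_of_le hc hcx
  have h1 : x ^ (1 - 1/μ') = x * (x ^ (1/μ'))⁻¹ := by
    rw [sub_eq_add_neg, Real.rpow_add hx, Real.rpow_one, Real.rpow_neg hx.le]
  rw [h1]
  have h2 : c ^ (1/μ') ≤ x ^ (1/μ') := Real.rpow_le_rpow hc.le hcx (by positivity)
  have h3 : (x ^ (1/μ'))⁻¹ ≤ (c ^ (1/μ'))⁻¹ := by
    apply inv_anti₀ (Real.rpow_pos_of_pos hc _) h2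
  exact mul_le_mul_of_nonneg_left h3 hx.le

lemma weight_shift_upper_single (hW : IsWeight Λ μ0 μ1 μ) (j : Fin n) :
    ∃ K > 0, ∀ k, Λ (kadd k (Pi.single j 1)) ≤ K * Λ k := by
  obtain ⟨C, hC, hd⟩ := weight_diff hW j
  obtain ⟨c, hc, hcl⟩ := weight_lower_bound hW
  have hμ := weight_mu_pos hW
  refine ⟨1 + C * (c ^ (1/μ))⁻¹, by positivity, fun k => ?_⟩
  have h1 := hd k
  have h2 : Λ k ^ (1 - 1/μ) ≤ Λ k * (c ^ (1/μ))⁻¹ := rpow_one_sub_le hc (hcl k) hμ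
  have h3 : Λ (kadd k (Pi.single j 1)) - Λ k ≤ |Λ (kadd k (Pi.single j 1)) - Λ k| :=
    le_abs_self _
  have h4 : C * Λ k ^ (1 - 1/μ) ≤ C * (Λ k * (c ^ (1/μ))⁻¹) :=
    mul_le_mul_of_nonneg_left h2 hC.le
  have h5 : (1 + C * (c ^ (1/μ))⁻¹) * Λ k = Λ k + C * (Λ k * (c ^ (1/μ))⁻¹) := by ring
  rw [h5]
  linarith

lemma weight_shift_lower_single (hW : IsWeight Λ μ0 μ1 μ) (j : Fin n) :
    ∃ K > 0, ∀ k, Λ k ≤ K * Λ (kadd k (Pi.single j 1)) := by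
  obtain ⟨C, hC, hd⟩ := weight_diff hW j
  obtain ⟨c, hc, hcl⟩ := weight_lower_bound hW
  have hμ := weight_mu_pos hW
  refine ⟨2 + (2*C) ^ μ / c, by positivity, fun k => ?_⟩
  have hΛpos : 0 < Λ k := hW.pos k
  have hΛpos' : 0 < Λ (kadd k (Pi.single j 1)) := hW.pos _
  have hsplit : (2 + (2*C) ^ μ / c) * Λ (kadd k (Pi.single j 1))
      = 2 * Λ (kadd k (Pi.single j 1)) + ((2*C) ^ μ / c) * Λ (kadd k (Pi.single j 1)) := by
    ring
  rw [hsplit]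
  rcases le_or_gt (Λ k ^ (1/μ)) (2*C) with hcase | hcase
  · have h1 : Λ k = (Λ k ^ (1/μ)) ^ μ := by
      rw [← Real.rpow_mul hΛpos.le, one_div_mul_cancel (ne_of_gt hμ), Real.rpow_one]
    have h2 : (Λ k ^ (1/μ)) ^ μ ≤ (2*C) ^ μ :=
      Real.rpow_le_rpow (Real.rpow_nonneg hΛpos.le _) hcase hμ.le
    have h3 : ((2*C) ^ μ / c) * c ≤ ((2*C) ^ μ / c) * Λ (kadd k (Pi.single j 1)) :=
      mul_le_mul_of_nonneg_left (hcl _) (by positivity)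
    have h4 : ((2*C) ^ μ / c) * c = (2*C) ^ μ := div_mul_cancel₀ _ (ne_of_gt hc)
    linarith
  · have h1 := hd k
    have h2 : Λ k ^ (1 - 1/μ) = Λ k * (Λ k ^ (1/μ))⁻¹ := by
      rw [sub_eq_add_neg, Real.rpow_add hΛpos, Real.rpow_one, Real.rpow_neg hΛpos.le]
    have h3 : (Λ k ^ (1/μ))⁻¹ ≤ (2*C)⁻¹ :=
      inv_anti₀ (by positivity) hcase.le
    have hCne : C ≠ 0 := ne_of_gt hC
    have h4 : C * Λ k ^ (1 - 1/μ) ≤ C * (Λ k * (2*C)⁻¹) := by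
      rw [h2]
      exact mul_le_mul_of_nonneg_left (mul_le_mul_of_nonneg_left h3 hΛpos.le) hC.le
    have h5 : C * (Λ k * (2*C)⁻¹) = Λ k / 2 := by
      field_simp
    have h6 : Λ k - Λ (kadd k (Pi.single j 1)) ≤ |Λ (kadd k (Pi.single j 1)) - Λ k| := by
      rw [abs_sub_comm]
      exact le_abs_self _
    have h7 : 0 ≤ ((2*C) ^ μ / c) * Λ (kadd k (Pi.single j 1)) := by positivity
    linarith

lemma weight_shift_upper (hW : IsWeight Λ μ0 μ1 μ) (δ : Fin n → ℕ) :
    ∃ K > 0, ∀ k, Λ (kadd k δ) ≤ K * Λ k := by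
  induction δ using mind with
  | h0 =>
    refine ⟨1, one_pos, fun k => ?_⟩
    rw [kadd_zero, one_mul]
  | hs δ j ih =>
    obtain ⟨K1, hK1, h1⟩ := ih
    obtain ⟨K2, hK2, h2⟩ := weight_shift_upper_single hW j
    refine ⟨K2 * K1, by positivity, fun k => ?_⟩
    have ha : kadd k (δ + Pi.single j 1) = kadd (kadd k δ) (Pi.single j 1) :=
      (kadd_add k δ (Pi.single j 1)).symm
    rw [ha]
    calc Λ (kadd (kadd k δ) (Pi.single j 1)) ≤ K2 * Λ (kadd k δ) := h2 _
      _ ≤ K2 * (K1 * Λ k) := mul_le_mul_of_nonneg_left (h1 k) hK2.le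
      _ = K2 * K1 * Λ k := by ring

lemma weight_shift_lower (hW : IsWeight Λ μ0 μ1 μ) (δ : Fin n → ℕ) :
    ∃ K > 0, ∀ k, Λ k ≤ K * Λ (kadd k δ) := by
  induction δ using mind with
  | h0 =>
    refine ⟨1, one_pos, fun k => ?_⟩
    rw [kadd_zero, one_mul]
  | hs δ j ih =>
    obtain ⟨K1, hK1, h1⟩ := ih
    obtain ⟨K2, hK2, h2⟩ := weight_shift_lower_single hW j
    refine ⟨K1 * K2, by positivity, fun k => ?_⟩
    have ha : kadd k (δ + Pi.single j 1) = kadd (kadd k δ) (Pi.single j 1) :=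
      (kadd_add k δ (Pi.single j 1)).symm
    rw [ha]
    calc Λ k ≤ K1 * Λ (kadd k δ) := h1 k
      _ ≤ K1 * (K2 * Λ (kadd (kadd k δ) (Pi.single j 1))) :=
        mul_le_mul_of_nonneg_left (h2 _) hK1.le
      _ = K1 * K2 * Λ (kadd (kadd k δ) (Pi.single j 1)) := by ring

lemma weight_shift_rpow (hW : IsWeight Λ μ0 μ1 μ) (δ : Fin n → ℕ) (s : ℝ) :
    ∃ K > 0, ∀ k, Λ (kadd k δ) ^ s ≤ K * Λ k ^ s := by
  rcases le_or_gt 0 s with hs | hs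
  · obtain ⟨K, hK, h⟩ := weight_shift_upper hW δ
    refine ⟨K ^ s, Real.rpow_pos_of_pos hK s, fun k => ?_⟩
    calc Λ (kadd k δ) ^ s ≤ (K * Λ k) ^ s :=
        Real.rpow_le_rpow (hW.pos _).le (h k) hs
      _ = K ^ s * Λ k ^ s := Real.mul_rpow hK.le (hW.pos k).le
  · obtain ⟨K, hK, h⟩ := weight_shift_lower hW δ
    refine ⟨(K ^ s)⁻¹, by positivity, fun k => ?_⟩
    have h1 : Λ k / K ≤ Λ (kadd k δ) := by
      rw [div_le_iff₀ hK]
      calc Λ k ≤ K * Λ (kadd k δ) := h k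
        _ = Λ (kadd k δ) * K := by ring
    have h2 : Λ (kadd k δ) ^ s ≤ (Λ k / K) ^ s :=
      Real.rpow_le_rpow_of_nonpos (div_pos (hW.pos k) hK) h1 hs.le
    calc Λ (kadd k δ) ^ s ≤ (Λ k / K) ^ s := h2
      _ = Λ k ^ s / K ^ s := Real.div_rpow (hW.pos k).le hK.le s
      _ = (K ^ s)⁻¹ * Λ k ^ s := by ring

end MAux
end AuxW
section AuxFinal
namespace MAux
variable {n : ℕ}

lemma rep_bound {Λ : (Fin n → ℤ) → ℝ} {μ0 μ1 μ ρ m : ℝ} (hW : IsWeight Λ μ0 μ1 μ)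
    {σ : (Fin n → ℤ) → (Fin n → ℝ) → ℂ} (hσ : ∀ k, ContDiff ℝ (⊤ : ℕ∞) (σ k))
    (hM : InM Λ ρ m σ) {γ N : Fin n → ℕ}
    {F : ((Fin n → ℤ) → ℂ) → (Fin n → ℤ) → ℂ} (hF : Rep γ N F) (hγ : ∀ j, γ j ≤ 1)
    (β : Fin n → ℕ) :
    (∀ k, ContDiff ℝ (⊤ : ℕ∞) (fun x => F (fun k' => σ k' x) k)) ∧
    ∃ C > 0, ∀ k x, ‖DM β (fun y => F (fun k' => σ k' y) k) x‖
      ≤ C * Λ k ^ (m - ρ * (mlen N : ℝ)) := by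
  induction hF with
  | basic η δ hη hδ =>
    constructor
    · intro k
      exact contDiff_Tk_symb σ hσ η N (kadd k δ)
    · obtain ⟨-, hS⟩ := hM η (fun j => le_trans (hη j) (hγ j))
      obtain ⟨C, hC, hb⟩ := hS N β
      obtain ⟨K, hK, hKb⟩ := weight_shift_rpow hW δ (m - ρ * (mlen N : ℝ))
      refine ⟨C * K, by positivity, fun k x => ?_⟩
      have h1 : ‖DM β (fun y => fdiffM N (Tk η (fun k' => σ k' y)) (kadd k δ)) x‖
          ≤ C * Λ (kadd k δ) ^ (m - ρ * (mlen N : ℝ)) := hb (kadd k δ) x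
      have h2 := hKb k
      calc ‖DM β (fun y => fdiffM N (Tk η (fun k' => σ k' y)) (kadd k δ)) x‖
          ≤ C * Λ (kadd k δ) ^ (m - ρ * (mlen N : ℝ)) := h1
        _ ≤ C * (K * Λ k ^ (m - ρ * (mlen N : ℝ))) := mul_le_mul_of_nonneg_left h2 hC.le
        _ = C * K * Λ k ^ (m - ρ * (mlen N : ℝ)) := by ring
  | zero =>
    constructor
    · intro k
      exact contDiff_const
    · refine ⟨1, one_pos, fun k x => ?_⟩
      show ‖DM β (fun _ => (0 : ℂ)) x‖ ≤ 1 * Λ k ^ (m - ρ * (mlen N : ℝ))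
      rw [DM_zero]
      have hp : 0 < Λ k ^ (m - ρ * (mlen N : ℝ)) := Real.rpow_pos_of_pos (hW.pos k) _
      simp only [norm_zero]
      linarith
  | @add F1 F2 hF1 hF2 ih1 ih2 =>
    obtain ⟨hs1, C1, hC1, hb1⟩ := ih1
    obtain ⟨hs2, C2, hC2, hb2⟩ := ih2
    constructor
    · intro k
      exact (hs1 k).add (hs2 k)
    · refine ⟨C1 + C2, by positivity, fun k x => ?_⟩
      have hval : DM β (fun y => F1 (fun k' => σ k' y) k + F2 (fun k' => σ k' y) k) x
          = DM β (fun y => F1 (fun k' => σ k' y) k) x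
            + DM β (fun y => F2 (fun k' => σ k' y) k) x :=
        congrFun (DM_add β (hs1 k) (hs2 k)) x
      show ‖DM β (fun y => F1 (fun k' => σ k' y) k + F2 (fun k' => σ k' y) k) x‖
          ≤ (C1 + C2) * Λ k ^ (m - ρ * (mlen N : ℝ))
      rw [hval]
      calc ‖DM β (fun y => F1 (fun k' => σ k' y) k) x
            + DM β (fun y => F2 (fun k' => σ k' y) k) x‖
          ≤ ‖DM β (fun y => F1 (fun k' => σ k' y) k) x‖
            + ‖DM β (fun y => F2 (fun k' => σ k' y) k) x‖ :=
          norm_add_le _ _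
        _ ≤ C1 * Λ k ^ (m - ρ * (mlen N : ℝ)) + C2 * Λ k ^ (m - ρ * (mlen N : ℝ)) :=
          add_le_add (hb1 k x) (hb2 k x)
        _ = (C1 + C2) * Λ k ^ (m - ρ * (mlen N : ℝ)) := by ring
  | @smul c F1 hF1 ih =>
    obtain ⟨hs1, C1, hC1, hb1⟩ := ih
    constructor
    · intro k
      exact contDiff_const.mul (hs1 k)
    · refine ⟨‖c‖ * C1 + 1, by positivity, fun k x => ?_⟩
      have hval : DM β (fun y => c * F1 (fun k' => σ k' y) k) x
          = c * DM β (fun y => F1 (fun k' => σ k' y) k) x :=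
        congrFun (DM_smul β c (hs1 k)) x
      show ‖DM β (fun y => c * F1 (fun k' => σ k' y) k) x‖
          ≤ (‖c‖ * C1 + 1) * Λ k ^ (m - ρ * (mlen N : ℝ))
      rw [hval, norm_mul]
      have hp : 0 < Λ k ^ (m - ρ * (mlen N : ℝ)) := Real.rpow_pos_of_pos (hW.pos k) _
      have h1 : ‖c‖ * ‖DM β (fun y => F1 (fun k' => σ k' y) k) x‖
          ≤ ‖c‖ * (C1 * Λ k ^ (m - ρ * (mlen N : ℝ))) :=
        mul_le_mul_of_nonneg_left (hb1 k x) (norm_nonneg c)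
      nlinarith [norm_nonneg c]
end MAux
end AuxFinal
noncomputable section
variable {n : ℕ}

theorem M_class_iff_shifted_differences (Λ : (Fin n → ℤ) → ℝ) (μ0 μ1 μ ρ m : ℝ)
    (hΛ : IsWeight Λ μ0 μ1 μ) (hρ : 0 < ρ) (hρμ : ρ ≤ 1 / μ)
    (σ : (Fin n → ℤ) → (Fin n → ℝ) → ℂ) (hσ : ∀ k, ContDiff ℝ (⊤ : ℕ∞) (σ k)) :
    InM Λ ρ m σ ↔
      ∀ α γ : Fin n → ℕ, (∀ j, γ j ≤ 1) →
        InS Λ ρ (m - ρ * (mlen α : ℝ))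
          (fun k x => kpow k γ * fdiffM (α + γ) (fun k' => σ k' x) k) := by
  constructor
  · intro hM α γ hγ
    constructor
    · intro k
      exact contDiff_const.mul (MAux.contDiff_fdiffM_symb σ hσ (α + γ) k)
    · intro α' β
      have hrep := MAux.main_rep γ hγ α α'
      obtain ⟨-, C, hC, hb⟩ := MAux.rep_bound hΛ hσ hM hrep hγ β
      refine ⟨C, hC, fun k x => ?_⟩
      have h1 := hb k x
      have hexp : m - ρ * (mlen (α + α') : ℝ)
          = m - ρ * (mlen α : ℝ) - ρ * (mlen α' : ℝ) := by
        rw [MAux.mlen_add]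
        push_cast
        ring
      rw [hexp] at h1
      exact h1
  · intro h γ hγ
    have h1 := h 0 γ hγ
    have h2 : (0 : Fin n → ℕ) + γ = γ := zero_add γ
    rw [h2] at h1
    have h3 : m - ρ * (mlen (0 : Fin n → ℕ) : ℝ) = m := by
      simp [mlen]
    rw [h3] at h1
    exact h1

end
end

section
/- With N_0 := n(1/μ_0 − ρ), the inclusions S^{m−N_0}_{ρ,Λ}(Z^n × T^n) ⊆ M^m_{ρ,Λ}(Z^n × T^n) ⊆ S^m_{ρ,Λ}(Z^n × T^n) hold for every m ∈ R and ρ ∈ (0, 1/μ]. -/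
open scoped BigOperators
open MeasureTheory

noncomputable section SMaux
variable {n : ℕ}

namespace SMaux

/-- shift in direction j -/
def sj (j : Fin n) (k : Fin n → ℤ) : Fin n → ℤ := fun i => k i + if i = j then 1 else 0

lemma fdiff_eq {M : Type*} [AddCommGroup M] (j : Fin n) (f : (Fin n → ℤ) → M) (k) :
    fdiff j f k = f (sj j k) - f k := rfl

lemma sj_comm (i j : Fin n) (k) : sj i (sj j k) = sj j (sj i k) := by
  funext l; simp only [sj]; ring

lemma fdiff_comm {M : Type*} [AddCommGroup M] (i j : Fin n) (f : (Fin n → ℤ) → M) :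
    fdiff i (fdiff j f) = fdiff j (fdiff i f) := by
  funext k
  simp only [fdiff_eq, sj_comm]
  abel

lemma fdiff_add {M : Type*} [AddCommGroup M] (j : Fin n) (f g : (Fin n → ℤ) → M) :
    fdiff j (fun k => f k + g k) = fun k => fdiff j f k + fdiff j g k := by
  funext k; simp only [fdiff_eq]; abel

lemma fdiff_const_mul (j : Fin n) (c : ℂ) (f : (Fin n → ℤ) → ℂ) :
    fdiff j (fun k => c * f k) = fun k => c * fdiff j f k := by
  funext k; simp only [fdiff_eq]; ring

lemma fdiff_iter_comm {M : Type*} [AddCommGroup M] (i j : Fin n) (a : ℕ) (f : (Fin n → ℤ) → M) :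
    (fdiff i)^[a] (fdiff j f) = fdiff j ((fdiff i)^[a] f) := by
  induction a generalizing f with
  | zero => rfl
  | succ a ih =>
    rw [Function.iterate_succ_apply, Function.iterate_succ_apply, fdiff_comm, ih]

lemma fdiff_iter_add {M : Type*} [AddCommGroup M] (j : Fin n) (a : ℕ) (f g : (Fin n → ℤ) → M) :
    (fdiff j)^[a] (fun k => f k + g k) = fun k => (fdiff j)^[a] f k + (fdiff j)^[a] g k := by
  induction a generalizing f g with
  | zero => rfl
  | succ a ih =>
    rw [Function.iterate_succ_apply, Function.iterate_succ_apply, Function.iterate_succ_apply,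
      fdiff_add, ih]

lemma fdiff_iter_const_mul (j : Fin n) (a : ℕ) (c : ℂ) (f : (Fin n → ℤ) → ℂ) :
    (fdiff j)^[a] (fun k => c * f k) = fun k => c * (fdiff j)^[a] f k := by
  induction a generalizing f with
  | zero => rfl
  | succ a ih =>
    rw [Function.iterate_succ_apply, Function.iterate_succ_apply, fdiff_const_mul, ih]

/-- multiplication by `k j` commutes with `fdiff i` for `i ≠ j` -/
lemma fdiff_mul_indep (i j : Fin n) (hij : i ≠ j) (f : (Fin n → ℤ) → ℂ) :
    fdiff i (fun k => (k j : ℂ) * f k) = fun k => (k j : ℂ) * fdiff i f k := by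
  funext k
  have hs : (sj i k) j = k j := by simp [sj, hij.symm]
  simp only [fdiff_eq, hs]; ring

lemma fdiff_iter_mul_indep (i j : Fin n) (hij : i ≠ j) (a : ℕ) (f : (Fin n → ℤ) → ℂ) :
    (fdiff i)^[a] (fun k => (k j : ℂ) * f k) = fun k => (k j : ℂ) * (fdiff i)^[a] f k := by
  induction a generalizing f with
  | zero => rfl
  | succ a ih =>
    rw [Function.iterate_succ_apply, Function.iterate_succ_apply, fdiff_mul_indep i j hij, ih]

/-- the basic commutator computation -/
lemma fdiff_mul_self (j : Fin n) (f : (Fin n → ℤ) → ℂ) :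
    fdiff j (fun k => (k j : ℂ) * f k) =
      fun k => (k j : ℂ) * fdiff j f k + f (sj j k) := by
  funext k
  have hs : ((sj j k) j : ℂ) = (k j : ℂ) + 1 := by simp [sj]
  simp only [fdiff_eq, hs]; ring

/-- shift commutes with fdiff -/
lemma fdiff_shift {M : Type*} [AddCommGroup M] (j : Fin n) (f : (Fin n → ℤ) → M) :
    fdiff j (fun k => f (sj j k)) = fun k => fdiff j f (sj j k) := by
  funext k; simp only [fdiff_eq]

lemma fdiff_iter_shift {M : Type*} [AddCommGroup M] (j : Fin n) (a : ℕ) (f : (Fin n → ℤ) → M) :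
    (fdiff j)^[a] (fun k => f (sj j k)) = fun k => (fdiff j)^[a] f (sj j k) := by
  induction a generalizing f with
  | zero => rfl
  | succ a ih =>
    rw [Function.iterate_succ_apply, Function.iterate_succ_apply, fdiff_shift, ih]

/-- shift as identity plus difference -/
lemma shift_eq (j : Fin n) (f : (Fin n → ℤ) → ℂ) (k) :
    f (sj j k) = fdiff j f k + f k := by simp [fdiff_eq]

/-- The key single-variable commutator identity:
`Δ_j^a (k_j · Δ_j h) = k_j Δ_j^{a+1} h + a Δ_j^{a+1} h + a Δ_j^a h`. -/
lemma iter_mul_fdiff (j : Fin n) (a : ℕ) (h : (Fin n → ℤ) → ℂ) :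
    (fdiff j)^[a] (fun k => (k j : ℂ) * fdiff j h k) =
      fun k => (k j : ℂ) * (fdiff j)^[a + 1] h k
        + (a : ℂ) * (fdiff j)^[a + 1] h k + (a : ℂ) * (fdiff j)^[a] h k := by
  induction a generalizing h with
  | zero =>
    funext k; simp
  | succ a ih =>
    have e1 : fdiff j (fun k => (k j : ℂ) * fdiff j h k) =
        fun k => (k j : ℂ) * fdiff j (fdiff j h) k +
          (fdiff j (fdiff j h) k + fdiff j h k) := by
      rw [fdiff_mul_self j (fdiff j h)]
      funext k
      rw [shift_eq j (fdiff j h) k]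
    rw [Function.iterate_succ_apply, e1, fdiff_iter_add, ih (fdiff j h), fdiff_iter_add]
    funext k
    simp only [Function.iterate_succ_apply]
    push_cast
    ring

/-! ### list-based operator machinery -/

def opL {M : Type*} [AddCommGroup M] (L : List (Fin n)) (α : Fin n → ℕ)
    (f : (Fin n → ℤ) → M) : (Fin n → ℤ) → M :=
  (L.map (fun j => (fdiff j)^[α j])).foldr (· ∘ ·) id f

lemma opL_nil {M : Type*} [AddCommGroup M] (α : Fin n → ℕ) (f : (Fin n → ℤ) → M) :
    opL [] α f = f := rfl

lemma opL_cons {M : Type*} [AddCommGroup M] (j : Fin n) (L : List (Fin n)) (α : Fin n → ℕ)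
    (f : (Fin n → ℤ) → M) : opL (j :: L) α f = (fdiff j)^[α j] (opL L α f) := rfl

lemma fdiffM_eq_opL {M : Type*} [AddCommGroup M] (α : Fin n → ℕ) (f : (Fin n → ℤ) → M) :
    fdiffM α f = opL (List.finRange n) α f := rfl

lemma opL_append {M : Type*} [AddCommGroup M] (L1 L2 : List (Fin n)) (α : Fin n → ℕ)
    (f : (Fin n → ℤ) → M) : opL (L1 ++ L2) α f = opL L1 α (opL L2 α f) := by
  induction L1 with
  | nil => rfl
  | cons j L ih => rw [List.cons_append, opL_cons, opL_cons, ih]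

lemma opL_congr {M : Type*} [AddCommGroup M] (L : List (Fin n)) (α α' : Fin n → ℕ)
    (h : ∀ i ∈ L, α i = α' i) (f : (Fin n → ℤ) → M) : opL L α f = opL L α' f := by
  induction L with
  | nil => rfl
  | cons j L ih =>
    rw [opL_cons, opL_cons, ih (fun i hi => h i (List.mem_cons_of_mem _ hi)),
      h j (List.mem_cons_self)]

lemma opL_add {M : Type*} [AddCommGroup M] (L : List (Fin n)) (α : Fin n → ℕ)
    (f g : (Fin n → ℤ) → M) :
    opL L α (fun k => f k + g k) = fun k => opL L α f k + opL L α g k := by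
  induction L with
  | nil => rfl
  | cons j L ih => rw [opL_cons, opL_cons, opL_cons, ih, fdiff_iter_add]

lemma opL_const_mul (L : List (Fin n)) (α : Fin n → ℕ) (c : ℂ) (f : (Fin n → ℤ) → ℂ) :
    opL L α (fun k => c * f k) = fun k => c * opL L α f k := by
  induction L with
  | nil => rfl
  | cons j L ih => rw [opL_cons, opL_cons, ih, fdiff_iter_const_mul]

lemma opL_fdiff_comm {M : Type*} [AddCommGroup M] (L : List (Fin n)) (α : Fin n → ℕ)
    (j : Fin n) (f : (Fin n → ℤ) → M) : opL L α (fdiff j f) = fdiff j (opL L α f) := by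
  induction L with
  | nil => rfl
  | cons i L ih => rw [opL_cons, opL_cons, ih, fdiff_iter_comm]

lemma opL_mul_indep (L : List (Fin n)) (α : Fin n → ℕ) (j : Fin n) (hj : j ∉ L)
    (f : (Fin n → ℤ) → ℂ) :
    opL L α (fun k => (k j : ℂ) * f k) = fun k => (k j : ℂ) * opL L α f k := by
  induction L with
  | nil => rfl
  | cons i L ih =>
    have hij : i ≠ j := fun h => hj (h ▸ List.mem_cons_self)
    rw [opL_cons, opL_cons, ih (fun h => hj (List.mem_cons_of_mem _ h)),
      fdiff_iter_mul_indep i j hij]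

lemma finRange_split (j : Fin n) :
    ∃ L1 L2 : List (Fin n), List.finRange n = L1 ++ j :: L2 ∧ j ∉ L1 ∧ j ∉ L2 := by
  obtain ⟨L1, L2, h⟩ := List.append_of_mem (List.mem_finRange j)
  refine ⟨L1, L2, h, ?_, ?_⟩ <;> (
    have hnd : (L1 ++ j :: L2).Nodup := h ▸ List.nodup_finRange n
    rw [List.nodup_middle] at hnd
    have := (List.nodup_cons.mp hnd).1
    simp only [List.mem_append] at this
    tauto)

lemma fdiffM_fdiff {M : Type*} [AddCommGroup M] (α : Fin n → ℕ) (j : Fin n)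
    (g : (Fin n → ℤ) → M) : fdiffM α (fdiff j g) = fdiff j (fdiffM α g) :=
  opL_fdiff_comm _ _ _ _

lemma fdiffM_single_add {M : Type*} [AddCommGroup M] (α : Fin n → ℕ) (j : Fin n)
    (g : (Fin n → ℤ) → M) :
    fdiffM (α + Pi.single j 1) g = fdiffM α (fdiff j g) := by
  obtain ⟨L1, L2, hsplit, hj1, hj2⟩ := finRange_split (n := n) j
  have hcongr : ∀ L : List (Fin n), j ∉ L → ∀ f : (Fin n → ℤ) → M,
      opL L (α + Pi.single j 1) f = opL L α f := by
    intro L hL f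
    exact opL_congr L _ _ (fun i hi => by
      have : i ≠ j := fun h => hL (h ▸ hi)
      simp [Pi.single_eq_of_ne this]) f
  rw [fdiffM_eq_opL, fdiffM_eq_opL, hsplit, opL_append, opL_append, opL_cons, opL_cons,
    hcongr L1 hj1, hcongr L2 hj2]
  have hαj : ((α + Pi.single j 1 : Fin n → ℕ)) j = α j + 1 := by simp
  rw [hαj, Function.iterate_succ_apply, opL_fdiff_comm]

/-- The key expansion:
`Δ^α (k_j Δ_j g) = (k_j + α_j) Δ^{α+e_j} g + α_j Δ^α g`. -/
lemma fdiffM_mul_fdiff (α : Fin n → ℕ) (j : Fin n) (g : (Fin n → ℤ) → ℂ) :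
    fdiffM α (fun k => (k j : ℂ) * fdiff j g k) =
      fun k => ((k j : ℂ) + (α j : ℂ)) * fdiffM (α + Pi.single j 1) g k
        + (α j : ℂ) * fdiffM α g k := by
  obtain ⟨L1, L2, hsplit, hj1, hj2⟩ := finRange_split (n := n) j
  have hcongr : ∀ L : List (Fin n), j ∉ L → ∀ f : (Fin n → ℤ) → ℂ,
      opL L (α + Pi.single j 1) f = opL L α f := by
    intro L hL f
    exact opL_congr L _ _ (fun i hi => by
      have : i ≠ j := fun h => hL (h ▸ hi)
      simp [Pi.single_eq_of_ne this]) f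
  have e2 : opL L2 α (fun k => (k j : ℂ) * fdiff j g k)
      = fun k => (k j : ℂ) * fdiff j (opL L2 α g) k := by
    rw [opL_mul_indep L2 α j hj2, opL_fdiff_comm]
  have key := iter_mul_fdiff j (α j) (opL L2 α g)
  have hA1 : fdiffM (α + Pi.single j 1) g
      = opL L1 α ((fdiff j)^[α j + 1] (opL L2 α g)) := by
    rw [fdiffM_eq_opL, hsplit, opL_append, opL_cons, hcongr L1 hj1, hcongr L2 hj2]
    congr 1
    simp
  have hA2 : fdiffM α g = opL L1 α ((fdiff j)^[α j] (opL L2 α g)) := by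
    rw [fdiffM_eq_opL, hsplit, opL_append, opL_cons]
  rw [fdiffM_eq_opL, hsplit, opL_append, opL_cons, e2, key, opL_add, opL_add,
    opL_mul_indep L1 α j hj1, opL_const_mul, opL_const_mul]
  funext k
  rw [hA1, hA2]
  ring

/-- fdiff of `P·g` when `P` is invariant under the `j`-shift. -/
lemma fdiff_mul_invariant (j : Fin n) (P g : (Fin n → ℤ) → ℂ) (hP : ∀ k, P (sj j k) = P k) :
    fdiff j (fun k => P k * g k) = fun k => P k * fdiff j g k := by
  funext k
  simp only [fdiff_eq, hP]
  ring

/-! ### smoothness in `y` of iterated differences -/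

lemma contDiff_fdiff_iter (τ : (Fin n → ℤ) → (Fin n → ℝ) → ℂ)
    (hτ : ∀ k, ContDiff ℝ (⊤ : ℕ∞) (τ k)) (j : Fin n) (a : ℕ) (k : Fin n → ℤ) :
    ContDiff ℝ (⊤ : ℕ∞) (fun y => (fdiff j)^[a] (fun k' => τ k' y) k) := by
  induction a generalizing τ with
  | zero => exact hτ k
  | succ a ih =>
    simp only [Function.iterate_succ_apply]
    exact ih (fun k' y => τ (sj j k') y - τ k' y) (fun k' => (hτ _).sub (hτ _))

lemma contDiff_opL (τ : (Fin n → ℤ) → (Fin n → ℝ) → ℂ)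
    (hτ : ∀ k, ContDiff ℝ (⊤ : ℕ∞) (τ k)) (L : List (Fin n)) (α : Fin n → ℕ) (k : Fin n → ℤ) :
    ContDiff ℝ (⊤ : ℕ∞) (fun y => opL L α (fun k' => τ k' y) k) := by
  induction L generalizing τ k with
  | nil => exact hτ k
  | cons j L ih =>
    simp only [opL_cons]
    exact contDiff_fdiff_iter (fun k' y => opL L α (fun k'' => τ k'' y) k')
      (fun k' => ih τ hτ k') j (α j) k

lemma contDiff_fdiffM (τ : (Fin n → ℤ) → (Fin n → ℝ) → ℂ)
    (hτ : ∀ k, ContDiff ℝ (⊤ : ℕ∞) (τ k)) (α : Fin n → ℕ) (k : Fin n → ℤ) :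
    ContDiff ℝ (⊤ : ℕ∞) (fun y => fdiffM α (fun k' => τ k' y) k) :=
  contDiff_opL τ hτ (List.finRange n) α k

/-! ### analytic lemmas for `DM` -/

lemma update_eq_add (x : Fin n → ℝ) (j : Fin n) (t : ℝ) :
    Function.update x j t = x + (t - x j) • (Pi.single j 1 : Fin n → ℝ) := by
  funext i
  rcases eq_or_ne i j with h | h
  · subst h; simp
  · simp [Function.update_apply, h, Pi.single_eq_of_ne h]

lemma hasDerivAt_update (g : (Fin n → ℝ) → ℂ) (hg : Differentiable ℝ g)
    (x : Fin n → ℝ) (j : Fin n) (t₀ : ℝ) :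
    HasDerivAt (fun t => g (Function.update x j t))
      (fderiv ℝ g (Function.update x j t₀) (Pi.single j 1)) t₀ := by
  have h1 : HasDerivAt (fun t : ℝ => x + (t - x j) • (Pi.single j 1 : Fin n → ℝ))
      (Pi.single j 1) t₀ := by
    have h := (((hasDerivAt_id t₀).sub_const (x j)).smul_const
      (Pi.single j 1 : Fin n → ℝ)).const_add x
    simpa using h
  have h2 := (hg _).hasFDerivAt.comp_hasDerivAt t₀ h1
  simp only [Function.comp_def, ← update_eq_add] at h2
  exact h2

lemma pderiv'_apply_eq {g : (Fin n → ℝ) → ℂ} (hg : ContDiff ℝ (⊤ : ℕ∞) g) (j : Fin n)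
    (x : Fin n → ℝ) : pderiv' j g x = fderiv ℝ g x (Pi.single j 1) := by
  have h := hasDerivAt_update g (hg.differentiable (by simp)) x j (x j)
  rw [Function.update_eq_self] at h
  exact h.deriv

lemma contDiff_pderiv' {g : (Fin n → ℝ) → ℂ} (hg : ContDiff ℝ (⊤ : ℕ∞) g) (j : Fin n) :
    ContDiff ℝ (⊤ : ℕ∞) (pderiv' j g) := by
  have : pderiv' j g = fun x => fderiv ℝ g x (Pi.single j 1) :=
    funext fun x => pderiv'_apply_eq hg j x
  rw [this]
  exact (hg.fderiv_right (by simp)).clm_apply contDiff_const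

lemma pderiv'_add {g1 g2 : (Fin n → ℝ) → ℂ} (hg1 : ContDiff ℝ (⊤ : ℕ∞) g1) (hg2 : ContDiff ℝ (⊤ : ℕ∞) g2)
    (j : Fin n) :
    pderiv' j (fun x => g1 x + g2 x) = fun x => pderiv' j g1 x + pderiv' j g2 x := by
  funext x
  have h1 := hasDerivAt_update g1 (hg1.differentiable (by simp)) x j (x j)
  have h2 := hasDerivAt_update g2 (hg2.differentiable (by simp)) x j (x j)
  simp only [pderiv']
  exact deriv_add h1.differentiableAt h2.differentiableAt

lemma pderiv'_const_mul (c : ℂ) (g : (Fin n → ℝ) → ℂ) (j : Fin n) :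
    pderiv' j (fun x => c * g x) = fun x => c * pderiv' j g x := by
  funext x
  simp only [pderiv']
  exact deriv_const_mul_field c

lemma contDiff_DOne {g : (Fin n → ℝ) → ℂ} (hg : ContDiff ℝ (⊤ : ℕ∞) g) (j : Fin n) :
    ContDiff ℝ (⊤ : ℕ∞) (DOne j g) :=
  contDiff_const.mul (contDiff_pderiv' hg j)

lemma DOne_add {g1 g2 : (Fin n → ℝ) → ℂ} (hg1 : ContDiff ℝ (⊤ : ℕ∞) g1) (hg2 : ContDiff ℝ (⊤ : ℕ∞) g2)
    (j : Fin n) :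
    DOne j (fun x => g1 x + g2 x) = fun x => DOne j g1 x + DOne j g2 x := by
  funext x
  simp only [DOne, pderiv'_add hg1 hg2 j]
  ring

lemma DOne_const_mul (c : ℂ) (g : (Fin n → ℝ) → ℂ) (j : Fin n) :
    DOne j (fun x => c * g x) = fun x => c * DOne j g x := by
  funext x
  simp only [DOne, pderiv'_const_mul c g j]
  ring

lemma contDiff_DShift {g : (Fin n → ℝ) → ℂ} (hg : ContDiff ℝ (⊤ : ℕ∞) g) (j : Fin n) (ℓ : ℕ) :
    ContDiff ℝ (⊤ : ℕ∞) (DShift j ℓ g) := by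
  induction ℓ with
  | zero => exact hg
  | succ ℓ ih => exact (contDiff_DOne ih j).sub (contDiff_const.mul ih)

lemma DShift_add {g1 g2 : (Fin n → ℝ) → ℂ} (hg1 : ContDiff ℝ (⊤ : ℕ∞) g1) (hg2 : ContDiff ℝ (⊤ : ℕ∞) g2)
    (j : Fin n) (ℓ : ℕ) :
    DShift j ℓ (fun x => g1 x + g2 x) = fun x => DShift j ℓ g1 x + DShift j ℓ g2 x := by
  induction ℓ with
  | zero => rfl
  | succ ℓ ih =>
    show (fun x => DOne j (DShift j ℓ fun x => g1 x + g2 x) x - _) = _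
    rw [ih, DOne_add (contDiff_DShift hg1 j ℓ) (contDiff_DShift hg2 j ℓ)]
    funext x
    show _ - (ℓ : ℂ) * (DShift j ℓ g1 x + DShift j ℓ g2 x) = _
    simp only [DShift]
    ring

lemma DShift_const_mul (c : ℂ) (g : (Fin n → ℝ) → ℂ) (j : Fin n) (ℓ : ℕ) :
    DShift j ℓ (fun x => c * g x) = fun x => c * DShift j ℓ g x := by
  induction ℓ with
  | zero => rfl
  | succ ℓ ih =>
    show (fun x => DOne j (DShift j ℓ fun x => c * g x) x - _) = _
    rw [ih, DOne_const_mul c (DShift j ℓ g) j]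
    funext x
    show _ - (ℓ : ℂ) * (c * DShift j ℓ g x) = _
    simp only [DShift]
    ring

def opD (L : List (Fin n)) (β : Fin n → ℕ) (g : (Fin n → ℝ) → ℂ) : (Fin n → ℝ) → ℂ :=
  (L.map (fun j => DShift j (β j))).foldr (· ∘ ·) id g

lemma opD_cons (j : Fin n) (L : List (Fin n)) (β : Fin n → ℕ) (g : (Fin n → ℝ) → ℂ) :
    opD (j :: L) β g = DShift j (β j) (opD L β g) := rfl

lemma DM_eq_opD (β : Fin n → ℕ) (g : (Fin n → ℝ) → ℂ) :
    DM β g = opD (List.finRange n) β g := rfl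

lemma contDiff_opD {g : (Fin n → ℝ) → ℂ} (hg : ContDiff ℝ (⊤ : ℕ∞) g) (L : List (Fin n))
    (β : Fin n → ℕ) : ContDiff ℝ (⊤ : ℕ∞) (opD L β g) := by
  induction L with
  | nil => exact hg
  | cons j L ih => exact contDiff_DShift ih j (β j)

lemma opD_add {g1 g2 : (Fin n → ℝ) → ℂ} (hg1 : ContDiff ℝ (⊤ : ℕ∞) g1) (hg2 : ContDiff ℝ (⊤ : ℕ∞) g2)
    (L : List (Fin n)) (β : Fin n → ℕ) :
    opD L β (fun x => g1 x + g2 x) = fun x => opD L β g1 x + opD L β g2 x := by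
  induction L with
  | nil => rfl
  | cons j L ih =>
    rw [opD_cons, ih, DShift_add (contDiff_opD hg1 L β) (contDiff_opD hg2 L β)]
    rfl

lemma opD_const_mul (c : ℂ) (g : (Fin n → ℝ) → ℂ) (L : List (Fin n)) (β : Fin n → ℕ) :
    opD L β (fun x => c * g x) = fun x => c * opD L β g x := by
  induction L with
  | nil => rfl
  | cons j L ih =>
    rw [opD_cons, ih, DShift_const_mul]
    rfl

lemma DM_add {g1 g2 : (Fin n → ℝ) → ℂ} (hg1 : ContDiff ℝ (⊤ : ℕ∞) g1) (hg2 : ContDiff ℝ (⊤ : ℕ∞) g2)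
    (β : Fin n → ℕ) :
    DM β (fun x => g1 x + g2 x) = fun x => DM β g1 x + DM β g2 x :=
  opD_add hg1 hg2 _ β

lemma DM_const_mul (c : ℂ) (g : (Fin n → ℝ) → ℂ) (β : Fin n → ℕ) :
    DM β (fun x => c * g x) = fun x => c * DM β g x :=
  opD_const_mul c g _ β

/-! ### weight arithmetic -/

lemma znorm_nonneg (k : Fin n → ℤ) : 0 ≤ znorm k := Real.sqrt_nonneg _

lemma abs_le_znorm (k : Fin n → ℤ) (j : Fin n) : |(k j : ℝ)| ≤ znorm k := by
  rw [znorm, ← Real.sqrt_sq_eq_abs]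
  exact Real.sqrt_le_sqrt (Finset.single_le_sum (f := fun i => ((k i : ℝ)) ^ 2)
    (fun i _ => sq_nonneg _) (Finset.mem_univ j))

lemma weight_lower_const {Λ : (Fin n → ℤ) → ℝ} {μ0 C0 : ℝ} (hC0 : 0 < C0) (hμ0 : 0 < μ0)
    (hlow : ∀ k : Fin n → ℤ, C0 * (1 + znorm k) ^ μ0 ≤ Λ k) (k : Fin n → ℤ) : C0 ≤ Λ k := by
  have h1 : (1:ℝ) ≤ (1 + znorm k) ^ μ0 :=
    Real.one_le_rpow (by linarith [znorm_nonneg k]) hμ0.le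
  nlinarith [hlow k]

lemma one_add_znorm_le {Λ : (Fin n → ℤ) → ℝ} {μ0 C0 : ℝ} (hC0 : 0 < C0) (hμ0 : 0 < μ0)
    (hpos : ∀ k, 0 < Λ k)
    (hlow : ∀ k : Fin n → ℤ, C0 * (1 + znorm k) ^ μ0 ≤ Λ k) (k : Fin n → ℤ) :
    1 + znorm k ≤ C0 ^ (-(1/μ0)) * Λ k ^ (1/μ0) := by
  have hz : (0:ℝ) ≤ 1 + znorm k := by linarith [znorm_nonneg k]
  have h1 : (1 + znorm k) ^ μ0 ≤ C0⁻¹ * Λ k := by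
    rw [inv_mul_eq_div, le_div_iff₀ hC0, mul_comm]
    exact hlow k
  have h2 := Real.rpow_le_rpow (Real.rpow_nonneg hz μ0) h1 (by positivity : (0:ℝ) ≤ 1/μ0)
  rw [← Real.rpow_mul hz, mul_one_div_cancel hμ0.ne', Real.rpow_one,
    Real.mul_rpow (inv_nonneg.mpr hC0.le) (hpos k).le, Real.inv_rpow hC0.le,
    ← Real.rpow_neg hC0.le] at h2
  exact h2

lemma rpow_le_of_exp_le {C0 L : ℝ} (hC0 : 0 < C0) (hge : C0 ≤ L) (hL : 0 < L) {e e' : ℝ}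
    (h : e ≤ e') : L ^ e ≤ C0 ^ (e - e') * L ^ e' := by
  have h1 : L ^ e = L ^ (e - e') * L ^ e' := by
    rw [← Real.rpow_add hL]; ring_nf
  rw [h1]
  exact mul_le_mul_of_nonneg_right
    (Real.rpow_le_rpow_of_nonpos hC0 hge (sub_nonpos.mpr h)) (Real.rpow_nonneg hL.le _)

lemma mlen_add_single (α : Fin n → ℕ) (j : Fin n) :
    mlen (α + Pi.single j 1) = mlen α + 1 := by
  simp only [mlen, Pi.add_apply, Finset.sum_add_distrib]
  simp [Pi.single_apply]

/-! ### monotonicity in the order -/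

lemma S_mono {Λ : (Fin n → ℤ) → ℝ} {μ0 μ1 μ ρ : ℝ} (hΛ : IsWeight Λ μ0 μ1 μ)
    {m1 m2 : ℝ} (h : m1 ≤ m2) {σ : (Fin n → ℤ) → (Fin n → ℝ) → ℂ}
    (hσ : InS Λ ρ m1 σ) : InS Λ ρ m2 σ := by
  obtain ⟨C0, hC0, hlow⟩ := hΛ.lower
  refine ⟨hσ.1, fun α β => ?_⟩
  obtain ⟨C, hC, hB⟩ := hσ.2 α β
  refine ⟨C * C0 ^ (m1 - m2), by positivity, fun k x => ?_⟩
  have hge := weight_lower_const hC0 hΛ.exp0 hlow k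
  have hexp : (m1 - ρ * (mlen α : ℝ)) - (m2 - ρ * (mlen α : ℝ)) = m1 - m2 := by ring
  calc ‖_‖ ≤ C * Λ k ^ (m1 - ρ * (mlen α : ℝ)) := hB k x
    _ ≤ C * (C0 ^ (m1 - m2) * Λ k ^ (m2 - ρ * (mlen α : ℝ))) := by
        refine mul_le_mul_of_nonneg_left ?_ hC.le
        have := rpow_le_of_exp_le hC0 hge (hΛ.pos k)
          (e := m1 - ρ * (mlen α : ℝ)) (e' := m2 - ρ * (mlen α : ℝ)) (by linarith)
        rwa [hexp] at this
    _ = C * C0 ^ (m1 - m2) * Λ k ^ (m2 - ρ * (mlen α : ℝ)) := by ring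

/-! ### the key step lemma -/

lemma stepS {Λ : (Fin n → ℤ) → ℝ} {μ0 μ1 μ ρ : ℝ} (hΛ : IsWeight Λ μ0 μ1 μ)
    (hρ : 0 < ρ) (hρμ0 : ρ ≤ 1/μ0) (m' : ℝ) (j : Fin n)
    {σ : (Fin n → ℤ) → (Fin n → ℝ) → ℂ} (hσ : InS Λ ρ m' σ) :
    InS Λ ρ (m' + (1/μ0 - ρ)) (fun k x => (k j : ℂ) * fdiff j (fun k' => σ k' x) k) := by
  obtain ⟨hsm, hb⟩ := hσ
  obtain ⟨C0, hC0, hlow⟩ := hΛ.lower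
  have hμ0 := hΛ.exp0
  have hμ0pos : (0:ℝ) < 1/μ0 := by positivity
  have hge := fun k => weight_lower_const hC0 hμ0 hlow k
  constructor
  · intro k
    exact contDiff_const.mul ((hsm _).sub (hsm _))
  · intro α β
    obtain ⟨C1, hC1, hB1⟩ := hb (α + Pi.single j 1) β
    obtain ⟨C2, hC2, hB2⟩ := hb α β
    refine ⟨C1 * C0 ^ (-(1/μ0)) + (α j : ℝ) * C1 * C0 ^ (-(1/μ0))
      + (α j : ℝ) * C2 * C0 ^ (-(1/μ0 - ρ)), by positivity, fun k x => ?_⟩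
    -- the structural identity
    have hid : symbDiff (fun k x => (k j : ℂ) * fdiff j (fun k' => σ k' x) k) α β k x
        = ((k j : ℂ) + (α j : ℂ)) * symbDiff σ (α + Pi.single j 1) β k x
          + (α j : ℂ) * symbDiff σ α β k x := by
      have hA1 : ContDiff ℝ (⊤ : ℕ∞) (fun y => fdiffM (α + Pi.single j 1) (fun k' => σ k' y) k) :=
        contDiff_fdiffM σ hsm _ k
      have hA2 : ContDiff ℝ (⊤ : ℕ∞) (fun y => fdiffM α (fun k' => σ k' y) k) :=
        contDiff_fdiffM σ hsm α k
      have hinner : (fun y => fdiffM α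
            (fun k' => (k' j : ℂ) * fdiff j (fun k'' => σ k'' y) k') k)
          = fun y => (((k j : ℂ) + (α j : ℂ)) *
              fdiffM (α + Pi.single j 1) (fun k' => σ k' y) k)
            + ((α j : ℂ) * fdiffM α (fun k' => σ k' y) k) := by
        funext y
        rw [fdiffM_mul_fdiff α j (fun k'' => σ k'' y)]
      show DM β _ x = _
      rw [hinner, DM_add (contDiff_const.mul hA1) (contDiff_const.mul hA2),
        DM_const_mul _ _ β, DM_const_mul _ _ β]
      rfl
    rw [hid]
    set T := m' + (1/μ0 - ρ) - ρ * (mlen α : ℝ) with hTdef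
    have hS1 : ‖symbDiff σ (α + Pi.single j 1) β k x‖ ≤ C1 * Λ k ^ (T - 1/μ0) := by
      have h := hB1 k x
      have hexp : m' - ρ * (mlen (α + Pi.single j 1) : ℝ) = T - 1/μ0 := by
        rw [mlen_add_single]; push_cast; rw [hTdef]; ring
      rwa [hexp] at h
    have hS2 : ‖symbDiff σ α β k x‖ ≤ C2 * Λ k ^ (T - (1/μ0 - ρ)) := by
      have h := hB2 k x
      have hexp : m' - ρ * (mlen α : ℝ) = T - (1/μ0 - ρ) := by rw [hTdef]; ring
      rwa [hexp] at h
    have hz := znorm_nonneg k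
    have hkj := abs_le_znorm k j
    have hLpos := hΛ.pos k
    -- key rpow estimates
    have key1 : (1 + znorm k) * Λ k ^ (T - 1/μ0) ≤ C0 ^ (-(1/μ0)) * Λ k ^ T := by
      have h1 := one_add_znorm_le hC0 hμ0 hΛ.pos hlow k
      calc (1 + znorm k) * Λ k ^ (T - 1/μ0)
          ≤ (C0 ^ (-(1/μ0)) * Λ k ^ (1/μ0)) * Λ k ^ (T - 1/μ0) :=
            mul_le_mul_of_nonneg_right h1 (Real.rpow_nonneg hLpos.le _)
        _ = C0 ^ (-(1/μ0)) * Λ k ^ T := by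
            rw [mul_assoc, ← Real.rpow_add hLpos]; ring_nf
    have key2 : Λ k ^ (T - 1/μ0) ≤ C0 ^ (-(1/μ0)) * Λ k ^ T := by
      have := rpow_le_of_exp_le hC0 (hge k) hLpos
        (e := T - 1/μ0) (e' := T) (by linarith)
      rwa [show T - 1/μ0 - T = -(1/μ0) by ring] at this
    have key3 : Λ k ^ (T - (1/μ0 - ρ)) ≤ C0 ^ (-(1/μ0 - ρ)) * Λ k ^ T := by
      have := rpow_le_of_exp_le hC0 (hge k) hLpos
        (e := T - (1/μ0 - ρ)) (e' := T) (by linarith)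
      rwa [show T - (1/μ0 - ρ) - T = -(1/μ0 - ρ) by ring] at this
    have hxb : |(k j : ℝ)| * Λ k ^ (T - 1/μ0) ≤ C0 ^ (-(1/μ0)) * Λ k ^ T := by
      refine le_trans ?_ key1
      exact mul_le_mul_of_nonneg_right (by linarith) (Real.rpow_nonneg hLpos.le _)
    have hA1nn : (0:ℝ) ≤ ‖symbDiff σ (α + Pi.single j 1) β k x‖ :=
      norm_nonneg _
    have hA2nn : (0:ℝ) ≤ ‖symbDiff σ α β k x‖ := norm_nonneg _
    calc ‖((k j : ℂ) + (α j : ℂ)) * symbDiff σ (α + Pi.single j 1) β k x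
            + (α j : ℂ) * symbDiff σ α β k x‖
        ≤ ‖((k j : ℂ) + (α j : ℂ)) * symbDiff σ (α + Pi.single j 1) β k x‖
          + ‖(α j : ℂ) * symbDiff σ α β k x‖ := norm_add_le _ _
      _ = ‖(k j : ℂ) + (α j : ℂ)‖
            * ‖symbDiff σ (α + Pi.single j 1) β k x‖
          + (α j : ℝ) * ‖symbDiff σ α β k x‖ := by
          rw [norm_mul, norm_mul, Complex.norm_natCast]
      _ ≤ (|(k j : ℝ)| + (α j : ℝ)) * ‖symbDiff σ (α + Pi.single j 1) β k x‖
          + (α j : ℝ) * ‖symbDiff σ α β k x‖ := by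
          refine add_le_add_left (mul_le_mul_of_nonneg_right ?_ hA1nn) _
          calc ‖(k j : ℂ) + (α j : ℂ)‖
              ≤ ‖(k j : ℂ)‖ + ‖(α j : ℂ)‖ := norm_add_le _ _
            _ = |(k j : ℝ)| + (α j : ℝ) := by
                rw [Complex.norm_intCast, Complex.norm_natCast]
      _ ≤ (|(k j : ℝ)| + (α j : ℝ)) * (C1 * Λ k ^ (T - 1/μ0))
          + (α j : ℝ) * (C2 * Λ k ^ (T - (1/μ0 - ρ))) := by
          gcongr <;> positivity
      _ = C1 * (|(k j : ℝ)| * Λ k ^ (T - 1/μ0)) + ((α j : ℝ) * C1) * Λ k ^ (T - 1/μ0)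
          + ((α j : ℝ) * C2) * Λ k ^ (T - (1/μ0 - ρ)) := by ring
      _ ≤ C1 * (C0 ^ (-(1/μ0)) * Λ k ^ T) + ((α j : ℝ) * C1) * (C0 ^ (-(1/μ0)) * Λ k ^ T)
          + ((α j : ℝ) * C2) * (C0 ^ (-(1/μ0 - ρ)) * Λ k ^ T) := by
          gcongr <;> positivity
      _ = (C1 * C0 ^ (-(1/μ0)) + (α j : ℝ) * C1 * C0 ^ (-(1/μ0))
          + (α j : ℝ) * C2 * C0 ^ (-(1/μ0 - ρ))) * Λ k ^ T := by ring

/-! ### buildup over a finset of coordinates -/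

lemma opL_zero {M : Type*} [AddCommGroup M] (L : List (Fin n)) (f : (Fin n → ℤ) → M) :
    opL L (0 : Fin n → ℕ) f = f := by
  induction L with
  | nil => rfl
  | cons j L ih => rw [opL_cons, Pi.zero_apply, Function.iterate_zero_apply, ih]

lemma fdiffM_zero {M : Type*} [AddCommGroup M] (f : (Fin n → ℤ) → M) :
    fdiffM (0 : Fin n → ℕ) f = f := by
  rw [fdiffM_eq_opL, opL_zero]

lemma buildM {Λ : (Fin n → ℤ) → ℝ} {μ0 μ1 μ ρ m : ℝ} (hΛ : IsWeight Λ μ0 μ1 μ)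
    (hρ : 0 < ρ) (hρμ0 : ρ ≤ 1/μ0) {σ : (Fin n → ℤ) → (Fin n → ℝ) → ℂ}
    (hσ : InS Λ ρ (m - n * (1/μ0 - ρ)) σ) (s : Finset (Fin n)) :
    InS Λ ρ (m - ((n : ℝ) - s.card) * (1/μ0 - ρ))
      (fun k x => (∏ i ∈ s, (k i : ℂ)) *
        fdiffM (fun i => if i ∈ s then 1 else 0) (fun k' => σ k' x) k) := by
  classical
  induction s using Finset.induction_on with
  | empty =>
    have hfun : (fun (k : Fin n → ℤ) (x : Fin n → ℝ) =>
        (∏ i ∈ (∅ : Finset (Fin n)), (k i : ℂ)) *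
          fdiffM (fun i => if i ∈ (∅ : Finset (Fin n)) then 1 else 0)
            (fun k' => σ k' x) k) = σ := by
      funext k x
      rw [Finset.prod_empty, one_mul,
        show (fun i : Fin n => if i ∈ (∅ : Finset (Fin n)) then 1 else 0)
          = (0 : Fin n → ℕ) from by funext i; simp,
        fdiffM_zero]
    rw [hfun]
    convert hσ using 2
    rw [Finset.card_empty]
    push_cast
    ring
  | @insert j s hj ih =>
    have h := stepS hΛ hρ hρμ0 _ j ih
    have hexp : (m - ((n : ℝ) - s.card) * (1/μ0 - ρ)) + (1/μ0 - ρ)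
        = m - ((n : ℝ) - (insert j s).card) * (1/μ0 - ρ) := by
      rw [Finset.card_insert_of_notMem hj]
      push_cast
      ring
    have hγ : (fun i : Fin n => if i ∈ s then 1 else 0) + Pi.single j 1
        = (fun i : Fin n => if i ∈ insert j s then 1 else 0) := by
      funext i
      rcases eq_or_ne i j with hij | hij
      · subst hij
        simp [hj, Pi.single_eq_same]
      · simp [Pi.single_eq_of_ne hij, Finset.mem_insert, hij]
    have hfun : (fun (k : Fin n → ℤ) (x : Fin n → ℝ) => (k j : ℂ) *
          fdiff j (fun k' => (∏ i ∈ s, (k' i : ℂ)) *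
            fdiffM (fun i => if i ∈ s then 1 else 0) (fun k'' => σ k'' x) k') k)
        = fun k x => (∏ i ∈ insert j s, (k i : ℂ)) *
            fdiffM (fun i => if i ∈ insert j s then 1 else 0) (fun k' => σ k' x) k := by
      funext k x
      have hP : ∀ k' : Fin n → ℤ, (∏ i ∈ s, ((sj j k') i : ℂ)) = ∏ i ∈ s, (k' i : ℂ) := by
        intro k'
        refine Finset.prod_congr rfl (fun i hi => ?_)
        have hij : i ≠ j := fun h => hj (h ▸ hi)
        simp [sj, hij]
      rw [fdiff_mul_invariant j _ _ hP, Finset.prod_insert hj,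
        fdiffM_fdiff (M := ℂ) _ j _ |>.symm, ← fdiffM_single_add, hγ]
      ring
    rw [hexp, hfun] at h
    exact h

end SMaux

end SMaux

noncomputable section
variable {n : ℕ}

theorem S_M_inclusions (Λ : (Fin n → ℤ) → ℝ) (μ0 μ1 μ ρ m : ℝ)
    (hΛ : IsWeight Λ μ0 μ1 μ) (hρ : 0 < ρ) (hρμ : ρ ≤ 1 / μ)
    (σ : (Fin n → ℤ) → (Fin n → ℝ) → ℂ) :
    (InS Λ ρ (m - n * (1 / μ0 - ρ)) σ → InM Λ ρ m σ) ∧ (InM Λ ρ m σ → InS Λ ρ m σ) := by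
  classical
  constructor
  · intro hσ γ hγ
    have hρμ0 : ρ ≤ 1 / μ0 :=
      le_trans hρμ (one_div_le_one_div_of_le hΛ.exp0 (le_trans hΛ.exp01 hΛ.exp1))
    set s : Finset (Fin n) := Finset.univ.filter (fun j => γ j = 1) with hs
    have hγs : γ = fun i => if i ∈ s then 1 else 0 := by
      funext i
      rcases Nat.le_one_iff_eq_zero_or_eq_one.mp (hγ i) with h | h <;> simp [hs, h]
    have h := SMaux.buildM hΛ hρ hρμ0 hσ s
    have hkpow : ∀ k : Fin n → ℤ, kpow k γ = ∏ i ∈ s, (k i : ℂ) := by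
      intro k
      rw [kpow, ← Finset.prod_filter_mul_prod_filter_not Finset.univ (fun j => γ j = 1)
        (fun j => (k j : ℂ) ^ (γ j))]
      have h1 : ∏ j ∈ Finset.univ.filter (fun j => γ j = 1), (k j : ℂ) ^ (γ j)
          = ∏ j ∈ s, (k j : ℂ) :=
        Finset.prod_congr rfl (fun j hjm => by
          rw [(Finset.mem_filter.mp hjm).2, pow_one])
      have h2 : ∏ j ∈ Finset.univ.filter (fun j => ¬ γ j = 1), (k j : ℂ) ^ (γ j) = 1 :=
        Finset.prod_eq_one (fun j hjm => by
          have h1 := (Finset.mem_filter.mp hjm).2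
          have h0 : γ j = 0 := by have := hγ j; omega
          rw [h0, pow_zero])
      rw [h1, h2, mul_one]
    have hfun : (fun (k : Fin n → ℤ) (x : Fin n → ℝ) =>
          kpow k γ * fdiffM γ (fun k' => σ k' x) k)
        = fun k x => (∏ i ∈ s, (k i : ℂ)) *
            fdiffM (fun i => if i ∈ s then 1 else 0) (fun k' => σ k' x) k := by
      funext k x
      rw [hkpow k]
      congr 1
      rw [hγs]
    rw [hfun]
    refine SMaux.S_mono hΛ ?_ h
    have hcard : (s.card : ℝ) ≤ n := by
      have := Finset.card_le_card (Finset.subset_univ s)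
      rw [Finset.card_univ, Fintype.card_fin] at this
      exact_mod_cast this
    have hδ : (0:ℝ) ≤ 1/μ0 - ρ := by linarith
    nlinarith
  · intro hM
    have h := hM 0 (fun j => by simp)
    have hfun : (fun (k : Fin n → ℤ) (x : Fin n → ℝ) =>
        kpow k 0 * fdiffM 0 (fun k' => σ k' x) k) = σ := by
      funext k x
      rw [show kpow k 0 = 1 from by simp [kpow], one_mul, SMaux.fdiffM_zero]
    rwa [hfun] at h

end
end

section
/- The intersections over all m ∈ R of M^m_{ρ,Λ}(Z^n × T^n) and of S^m_{ρ,Λ}(Z^n × T^n) coincide: ⋂_m M^m_{ρ,Λ} = ⋂_m S^m_{ρ,Λ} = S^{−∞}_{ρ,Λ}. -/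
open scoped BigOperators
open MeasureTheory

noncomputable section
variable {n : ℕ}

/-! ### Auxiliary lemmas -/

section Aux

/-- The vector in Euclidean space corresponding to a lattice point. -/
def zvec (k : Fin n → ℤ) : EuclideanSpace ℝ (Fin n) :=
  (WithLp.equiv 2 (Fin n → ℝ)).symm fun j => (k j : ℝ)

lemma znorm_eq_norm (k : Fin n → ℤ) : znorm k = ‖zvec k‖ := by
  rw [EuclideanSpace.norm_eq, znorm]
  congr 1
  refine Finset.sum_congr rfl fun j _ => ?_
  rw [Real.norm_eq_abs, sq_abs]
  rfl

lemma zvec_add (a b : Fin n → ℤ) : zvec (a + b) = zvec a + zvec b := by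
  ext j
  show ((a j + b j : ℤ) : ℝ) = (a j : ℝ) + (b j : ℝ)
  push_cast
  ring

lemma zvec_neg (a : Fin n → ℤ) : zvec (-a) = -zvec a := by
  ext j
  show ((-(a j) : ℤ) : ℝ) = -(a j : ℝ)
  push_cast
  ring

lemma znorm_nonneg (k : Fin n → ℤ) : 0 ≤ znorm k := Real.sqrt_nonneg _

lemma znorm_le_add (k δ : Fin n → ℤ) : znorm k ≤ znorm (k + δ) + znorm δ := by
  have h : k = (k + δ) + (-δ) := by abel
  calc znorm k = ‖zvec ((k + δ) + (-δ))‖ := by rw [← h, znorm_eq_norm]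
    _ = ‖zvec (k + δ) + zvec (-δ)‖ := by rw [zvec_add]
    _ ≤ ‖zvec (k + δ)‖ + ‖zvec (-δ)‖ := norm_add_le _ _
    _ = znorm (k + δ) + znorm δ := by
        rw [zvec_neg, norm_neg, ← znorm_eq_norm, ← znorm_eq_norm]

lemma abs_coord_le_znorm (k : Fin n → ℤ) (j : Fin n) : |(k j : ℝ)| ≤ znorm k := by
  rw [znorm, ← Real.sqrt_sq_eq_abs]
  exact Real.sqrt_le_sqrt (Finset.single_le_sum (f := fun i => ((k i : ℝ)) ^ 2)
    (fun i _ => sq_nonneg _) (Finset.mem_univ j))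

lemma one_add_znorm_pos (k : Fin n → ℤ) : (0:ℝ) < 1 + znorm k := by
  linarith [znorm_nonneg k]

lemma decay_translate (N : ℕ) (k δ : Fin n → ℤ) :
    (1 + znorm (k + δ)) ^ (-(N:ℝ)) ≤ (1 + znorm δ) ^ ((N:ℝ)) * (1 + znorm k) ^ (-(N:ℝ)) := by
  have hA := one_add_znorm_pos (k + δ)
  have hB := one_add_znorm_pos δ
  have hK := one_add_znorm_pos k
  have hbase : 1 + znorm k ≤ (1 + znorm (k + δ)) * (1 + znorm δ) := by
    have := znorm_le_add k δ
    nlinarith [znorm_nonneg (k + δ), znorm_nonneg δ]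
  have h1 : (1 + znorm k) ^ ((N:ℝ)) ≤ (1 + znorm (k + δ)) ^ ((N:ℝ)) * (1 + znorm δ) ^ ((N:ℝ)) := by
    rw [← Real.mul_rpow (by positivity) (by positivity)]
    exact Real.rpow_le_rpow hK.le hbase (by positivity)
  have hAp : (0:ℝ) < (1 + znorm (k + δ)) ^ ((N:ℝ)) := Real.rpow_pos_of_pos hA _
  have hKp : (0:ℝ) < (1 + znorm k) ^ ((N:ℝ)) := Real.rpow_pos_of_pos hK _
  rw [Real.rpow_neg hA.le, Real.rpow_neg hK.le, ← one_div, ← div_eq_mul_inv,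
    div_le_div_iff₀ hAp hKp]
  calc (1:ℝ) * (1 + znorm k) ^ ((N:ℝ)) = (1 + znorm k) ^ ((N:ℝ)) := one_mul _
    _ ≤ (1 + znorm (k + δ)) ^ ((N:ℝ)) * (1 + znorm δ) ^ ((N:ℝ)) := h1
    _ = (1 + znorm δ) ^ ((N:ℝ)) * (1 + znorm (k + δ)) ^ ((N:ℝ)) := mul_comm _ _

lemma abs_kpow_le (k : Fin n → ℤ) (γ : Fin n → ℕ) :
    ‖kpow k γ‖ ≤ (1 + znorm k) ^ ((mlen γ : ℕ) : ℝ) := by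
  rw [Real.rpow_natCast, kpow, mlen, ← Finset.prod_pow_eq_pow_sum, Complex.norm_prod]
  refine Finset.prod_le_prod (fun i _ => norm_nonneg _) fun j _ => ?_
  rw [Complex.norm_pow]
  refine pow_le_pow_left₀ (norm_nonneg _) ?_ _
  rw [Complex.norm_intCast]
  have := abs_coord_le_znorm k j
  linarith

end Aux

section Weight

variable {Λ : (Fin n → ℤ) → ℝ} {μ0 μ1 μ : ℝ}

lemma weight_decay (hΛ : IsWeight Λ μ0 μ1 μ) (N : ℕ) :
    ∃ m : ℝ, ∃ C > 0, ∀ k, Λ k ^ m ≤ C * (1 + znorm k) ^ (-(N:ℝ)) := by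
  obtain ⟨C0, hC0, h0⟩ := hΛ.lower
  have hμ0 : 0 < μ0 := hΛ.exp0
  refine ⟨-(N:ℝ)/μ0, C0 ^ (-(N:ℝ)/μ0), Real.rpow_pos_of_pos hC0 _, fun k => ?_⟩
  have h1 : (0:ℝ) < 1 + znorm k := one_add_znorm_pos k
  have hm : -(N:ℝ)/μ0 ≤ 0 := by
    apply div_nonpos_of_nonpos_of_nonneg
    · simp
    · linarith
  have h2 : Λ k ^ (-(N:ℝ)/μ0) ≤ (C0 * (1 + znorm k) ^ μ0) ^ (-(N:ℝ)/μ0) :=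
    Real.rpow_le_rpow_of_nonpos (by positivity) (h0 k) hm
  refine h2.trans (le_of_eq ?_)
  have he : μ0 * (-(N:ℝ)/μ0) = -(N:ℝ) := by field_simp
  rw [Real.mul_rpow hC0.le (by positivity), ← Real.rpow_mul h1.le, he]

lemma weight_lower (hΛ : IsWeight Λ μ0 μ1 μ) (E : ℝ) :
    ∃ N : ℕ, ∃ C > 0, ∀ k, (1 + znorm k) ^ (-(N:ℝ)) ≤ C * Λ k ^ E := by
  obtain ⟨C0, hC0, h0⟩ := hΛ.lower
  obtain ⟨C1, hC1, h1⟩ := hΛ.upper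
  have hμ0 : 0 < μ0 := hΛ.exp0
  rcases le_or_gt 0 E with hE | hE
  · refine ⟨0, C0 ^ (-E), Real.rpow_pos_of_pos hC0 _, fun k => ?_⟩
    have hz := znorm_nonneg k
    have hone : (1:ℝ) ≤ (1 + znorm k) ^ μ0 := Real.one_le_rpow (by linarith) hμ0.le
    have hΛk : C0 ≤ Λ k := le_trans (by nlinarith) (h0 k)
    have h2 : C0 ^ E ≤ Λ k ^ E := Real.rpow_le_rpow hC0.le hΛk hE
    have hpos : (0:ℝ) < C0 ^ (-E) := Real.rpow_pos_of_pos hC0 _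
    simp only [Nat.cast_zero, neg_zero, Real.rpow_zero]
    calc (1:ℝ) = C0 ^ (-E) * C0 ^ E := by rw [← Real.rpow_add hC0]; simp
      _ ≤ C0 ^ (-E) * Λ k ^ E := by gcongr
  · refine ⟨⌈-μ1 * E⌉₊, C1 ^ (-E), Real.rpow_pos_of_pos hC1 _, fun k => ?_⟩
    have hz := znorm_nonneg k
    have hbase : (1:ℝ) ≤ 1 + znorm k := by linarith
    have step1 : (1 + znorm k) ^ (-((⌈-μ1 * E⌉₊ : ℕ):ℝ)) ≤ (1 + znorm k) ^ (μ1 * E) := by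
      apply Real.rpow_le_rpow_of_exponent_le hbase
      have := Nat.le_ceil (-μ1 * E)
      linarith
    refine step1.trans ?_
    have h3 : (C1 * (1 + znorm k) ^ μ1) ^ E ≤ Λ k ^ E :=
      Real.rpow_le_rpow_of_nonpos (hΛ.pos k) (h1 k) hE.le
    have h4 : (C1 * (1 + znorm k) ^ μ1) ^ E = C1 ^ E * (1 + znorm k) ^ (μ1 * E) := by
      rw [Real.mul_rpow hC1.le (by positivity), ← Real.rpow_mul (by linarith)]
    calc (1 + znorm k) ^ (μ1 * E)
        = C1 ^ (-E) * (C1 ^ E * (1 + znorm k) ^ (μ1 * E)) := by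
          rw [← mul_assoc, ← Real.rpow_add hC1]; simp
      _ = C1 ^ (-E) * (C1 * (1 + znorm k) ^ μ1) ^ E := by rw [h4]
      _ ≤ C1 ^ (-E) * Λ k ^ E := by
          have : (0:ℝ) < C1 ^ (-E) := Real.rpow_pos_of_pos hC1 _
          gcongr

end Weight

section Calc

lemma pderiv'_eq {g : (Fin n → ℝ) → ℂ} {x : Fin n → ℝ} (hg : DifferentiableAt ℝ g x) (j : Fin n) :
    pderiv' j g x = fderiv ℝ g x (Pi.single j 1) := by
  have h1 : HasFDerivAt g (fderiv ℝ g x) (Function.update x j (x j)) := by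
    rw [Function.update_eq_self]
    exact hg.hasFDerivAt
  have h2 := h1.comp_hasDerivAt (x j) (hasDerivAt_update x j (x j))
  exact h2.deriv

lemma pderiv'_contDiff {g : (Fin n → ℝ) → ℂ} (hg : ContDiff ℝ (⊤ : ℕ∞) g) (j : Fin n) :
    ContDiff ℝ (⊤ : ℕ∞) (pderiv' j g) := by
  have hd : Differentiable ℝ g := hg.differentiable (by simp)
  have h : pderiv' j g = fun x => (fderiv ℝ g x) (Pi.single j 1) :=
    funext fun x => pderiv'_eq (hd x) j
  rw [h]
  exact (ContinuousLinearMap.apply ℝ ℂ (Pi.single j 1)).contDiff.comp (hg.fderiv_right (m := ((⊤ : ℕ∞) : WithTop ℕ∞)) (by exact_mod_cast le_top))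

lemma pderiv'_add {g1 g2 : (Fin n → ℝ) → ℂ} (h1 : ContDiff ℝ (⊤ : ℕ∞) g1) (h2 : ContDiff ℝ (⊤ : ℕ∞) g2)
    (j : Fin n) (x : Fin n → ℝ) :
    pderiv' j (fun y => g1 y + g2 y) x = pderiv' j g1 x + pderiv' j g2 x := by
  have d1 : DifferentiableAt ℝ g1 x := (h1.differentiable (by simp)) x
  have d2 : DifferentiableAt ℝ g2 x := (h2.differentiable (by simp)) x
  have hadd : fderiv ℝ (fun y => g1 y + g2 y) x = fderiv ℝ g1 x + fderiv ℝ g2 x := fderiv_add d1 d2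
  rw [pderiv'_eq (g := fun y => g1 y + g2 y) (d1.add d2) j, pderiv'_eq d1 j, pderiv'_eq d2 j, hadd]
  rfl

lemma pderiv'_const_mul {g : (Fin n → ℝ) → ℂ} (hg : ContDiff ℝ (⊤ : ℕ∞) g) (c : ℂ)
    (j : Fin n) (x : Fin n → ℝ) :
    pderiv' j (fun y => c * g y) x = c * pderiv' j g x := by
  have d : DifferentiableAt ℝ g x := (hg.differentiable (by simp)) x
  rw [pderiv'_eq (d.const_mul c) j, pderiv'_eq d j, fderiv_const_mul d c]
  rfl

lemma DOne_contDiff {g : (Fin n → ℝ) → ℂ} (hg : ContDiff ℝ (⊤ : ℕ∞) g) (j : Fin n) :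
    ContDiff ℝ (⊤ : ℕ∞) (DOne j g) :=
  contDiff_const.mul (pderiv'_contDiff hg j)

lemma DOne_add {g1 g2 : (Fin n → ℝ) → ℂ} (h1 : ContDiff ℝ (⊤ : ℕ∞) g1) (h2 : ContDiff ℝ (⊤ : ℕ∞) g2)
    (j : Fin n) (x : Fin n → ℝ) :
    DOne j (fun y => g1 y + g2 y) x = DOne j g1 x + DOne j g2 x := by
  unfold DOne
  rw [pderiv'_add h1 h2 j x]
  ring

lemma DOne_const_mul {g : (Fin n → ℝ) → ℂ} (hg : ContDiff ℝ (⊤ : ℕ∞) g) (c : ℂ)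
    (j : Fin n) (x : Fin n → ℝ) :
    DOne j (fun y => c * g y) x = c * DOne j g x := by
  unfold DOne
  rw [pderiv'_const_mul hg c j x]
  ring

lemma DShift_contDiff (j : Fin n) (ℓ : ℕ) {g : (Fin n → ℝ) → ℂ} (hg : ContDiff ℝ (⊤ : ℕ∞) g) :
    ContDiff ℝ (⊤ : ℕ∞) (DShift j ℓ g) := by
  induction ℓ with
  | zero => exact hg
  | succ ℓ ih => exact (DOne_contDiff ih j).sub (contDiff_const.mul ih)

lemma DShift_add (j : Fin n) (ℓ : ℕ) {g1 g2 : (Fin n → ℝ) → ℂ}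
    (h1 : ContDiff ℝ (⊤ : ℕ∞) g1) (h2 : ContDiff ℝ (⊤ : ℕ∞) g2) :
    DShift j ℓ (fun y => g1 y + g2 y) = fun x => DShift j ℓ g1 x + DShift j ℓ g2 x := by
  induction ℓ with
  | zero => rfl
  | succ ℓ ih =>
      funext x
      show DOne j (DShift j ℓ (fun y => g1 y + g2 y)) x
          - (ℓ : ℂ) * DShift j ℓ (fun y => g1 y + g2 y) x = _
      rw [ih]
      have e1 := DOne_add (DShift_contDiff j ℓ h1) (DShift_contDiff j ℓ h2) j x
      rw [e1]
      show _ = (DOne j (DShift j ℓ g1) x - (ℓ:ℂ) * DShift j ℓ g1 x)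
          + (DOne j (DShift j ℓ g2) x - (ℓ:ℂ) * DShift j ℓ g2 x)
      ring

lemma DShift_const_mul (j : Fin n) (ℓ : ℕ) {g : (Fin n → ℝ) → ℂ} (hg : ContDiff ℝ (⊤ : ℕ∞) g) (c : ℂ) :
    DShift j ℓ (fun y => c * g y) = fun x => c * DShift j ℓ g x := by
  induction ℓ with
  | zero => rfl
  | succ ℓ ih =>
      funext x
      show DOne j (DShift j ℓ (fun y => c * g y)) x
          - (ℓ : ℂ) * DShift j ℓ (fun y => c * g y) x = _
      rw [ih]
      have e1 := DOne_const_mul (DShift_contDiff j ℓ hg) c j x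
      rw [e1]
      show _ = c * (DOne j (DShift j ℓ g) x - (ℓ:ℂ) * DShift j ℓ g x)
      ring

/-- The linearity/smoothness package for operators in the `x` variable. -/
def LinOpP (F : ((Fin n → ℝ) → ℂ) → ((Fin n → ℝ) → ℂ)) : Prop :=
  (∀ g, ContDiff ℝ (⊤ : ℕ∞) g → ContDiff ℝ (⊤ : ℕ∞) (F g)) ∧
  (∀ g1 g2, ContDiff ℝ (⊤ : ℕ∞) g1 → ContDiff ℝ (⊤ : ℕ∞) g2 →
    F (fun y => g1 y + g2 y) = fun x => F g1 x + F g2 x) ∧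
  (∀ (c : ℂ) g, ContDiff ℝ (⊤ : ℕ∞) g → F (fun y => c * g y) = fun x => c * F g x)

lemma linOpP_DShift (j : Fin n) (ℓ : ℕ) : LinOpP (DShift j ℓ) :=
  ⟨fun _ hg => DShift_contDiff j ℓ hg,
   fun _ _ h1 h2 => DShift_add j ℓ h1 h2,
   fun c _ hg => DShift_const_mul j ℓ hg c⟩

lemma linOpP_foldr (L : List (((Fin n → ℝ) → ℂ) → ((Fin n → ℝ) → ℂ)))
    (h : ∀ F ∈ L, LinOpP F) : LinOpP (L.foldr (· ∘ ·) id) := by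
  induction L with
  | nil => exact ⟨fun g hg => hg, fun _ _ _ _ => rfl, fun _ _ _ => rfl⟩
  | cons F L ih =>
      obtain ⟨hs, ha, hc⟩ := h F (List.mem_cons_self)
      obtain ⟨gs, ga, gc⟩ := ih fun G hG => h G (List.mem_cons_of_mem F hG)
      refine ⟨fun g hg => hs _ (gs g hg), ?_, ?_⟩
      · intro g1 g2 h1 h2
        show F ((L.foldr (· ∘ ·) id) (fun y => g1 y + g2 y)) = _
        rw [ga g1 g2 h1 h2, ha _ _ (gs _ h1) (gs _ h2)]
        rfl
      · intro c g hg
        show F ((L.foldr (· ∘ ·) id) (fun y => c * g y)) = _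
        rw [gc c g hg, hc c _ (gs g hg)]
        rfl

lemma linOpP_DM (β : Fin n → ℕ) : LinOpP (DM β) := by
  have h : DM β = (((List.finRange n).map fun j => DShift j (β j)).foldr (· ∘ ·) id) := rfl
  rw [h]
  apply linOpP_foldr
  intro F hF
  rw [List.mem_map] at hF
  obtain ⟨j, _, rfl⟩ := hF
  exact linOpP_DShift j (β j)

lemma DM_add (β : Fin n → ℕ) {g1 g2 : (Fin n → ℝ) → ℂ}
    (h1 : ContDiff ℝ (⊤ : ℕ∞) g1) (h2 : ContDiff ℝ (⊤ : ℕ∞) g2) (x : Fin n → ℝ) :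
    DM β (fun y => g1 y + g2 y) x = DM β g1 x + DM β g2 x :=
  congrFun ((linOpP_DM β).2.1 g1 g2 h1 h2) x

lemma DM_const_mul (β : Fin n → ℕ) {g : (Fin n → ℝ) → ℂ} (hg : ContDiff ℝ (⊤ : ℕ∞) g)
    (c : ℂ) (x : Fin n → ℝ) :
    DM β (fun y => c * g y) x = c * DM β g x :=
  congrFun ((linOpP_DM β).2.2 c g hg) x

lemma contDiff_list_sum {ι : Type*} (L : List ι) (c : ι → ℂ) (f : ι → (Fin n → ℝ) → ℂ)
    (hf : ∀ p ∈ L, ContDiff ℝ (⊤ : ℕ∞) (f p)) :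
    ContDiff ℝ (⊤ : ℕ∞) (fun y => (L.map fun p => c p * f p y).sum) := by
  induction L with
  | nil => simpa using contDiff_const
  | cons a L ih =>
      simp only [List.map_cons, List.sum_cons]
      exact (contDiff_const.mul (hf a (by simp))).add (ih fun p hp => hf p (by simp [hp]))

lemma DM_list_sum {ι : Type*} (β : Fin n → ℕ) (L : List ι) (c : ι → ℂ)
    (f : ι → (Fin n → ℝ) → ℂ) (hf : ∀ p ∈ L, ContDiff ℝ (⊤ : ℕ∞) (f p)) (x : Fin n → ℝ) :
    DM β (fun y => (L.map fun p => c p * f p y).sum) x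
      = (L.map fun p => c p * DM β (f p) x).sum := by
  induction L with
  | nil =>
      have h := DM_const_mul β (contDiff_const (c := (0:ℂ))) 0 x
      simpa using h
  | cons a L ih =>
      have hfa : ContDiff ℝ (⊤ : ℕ∞) (f a) := hf a (by simp)
      have hfL : ∀ p ∈ L, ContDiff ℝ (⊤ : ℕ∞) (f p) := fun p hp => hf p (by simp [hp])
      have hsum : ContDiff ℝ (⊤ : ℕ∞) (fun y => (L.map fun p => c p * f p y).sum) :=
        contDiff_list_sum L c f hfL
      calc DM β (fun y => ((a :: L).map fun p => c p * f p y).sum) x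
          = DM β (fun y => c a * f a y) x
            + DM β (fun y => (L.map fun p => c p * f p y).sum) x :=
            DM_add β (contDiff_const.mul hfa) hsum x
        _ = c a * DM β (f a) x + (L.map fun p => c p * DM β (f p) x).sum := by
            rw [DM_const_mul β hfa (c a) x, ih hfL]
        _ = ((a :: L).map fun p => c p * DM β (f p) x).sum := by simp

end Calc

section Exp

/-- Unit lattice vector in direction `j`. -/
def e1v (j : Fin n) : Fin n → ℤ := fun i => if i = j then 1 else 0

/-- An operator on lattice functions given by a finite combination of shifts. -/
def HasExp (F : ((Fin n → ℤ) → ℂ) → ((Fin n → ℤ) → ℂ)) : Prop :=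
  ∃ L : List ((Fin n → ℤ) × ℤ), ∀ g k, F g k = (L.map fun p => (p.2 : ℂ) * g (k + p.1)).sum

lemma hasExp_id : HasExp (n := n) id := by
  refine ⟨[(0, 1)], fun g k => ?_⟩
  simp

lemma hasExp_comp {F G : ((Fin n → ℤ) → ℂ) → ((Fin n → ℤ) → ℂ)}
    (hF : HasExp F) (hG : HasExp G) : HasExp (F ∘ G) := by
  obtain ⟨LF, hLF⟩ := hF
  obtain ⟨LG, hLG⟩ := hG
  refine ⟨LF.flatMap fun p => LG.map fun q => (p.1 + q.1, p.2 * q.2), fun g k => ?_⟩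
  show F (G g) k = _
  rw [hLF (G g) k]
  clear hLF
  induction LF with
  | nil => simp
  | cons p LF ih =>
      simp only [List.map_cons, List.sum_cons, List.flatMap_cons, List.map_append,
        List.sum_append]
      rw [ih]
      congr 1
      rw [hLG, List.map_map, ← List.sum_map_mul_left]
      refine congrArg List.sum (List.map_congr_left fun q _ => ?_)
      show (p.2 : ℂ) * ((q.2 : ℂ) * g (k + p.1 + q.1))
          = ((p.2 * q.2 : ℤ) : ℂ) * g (k + (p.1 + q.1))
      push_cast
      rw [add_assoc]
      ring

lemma hasExp_fdiff (j : Fin n) : HasExp (fdiff (M := ℂ) j) := by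
  refine ⟨[(e1v j, 1), (0, -1)], fun g k => ?_⟩
  have h : (fun i => k i + if i = j then 1 else 0) = k + e1v j := rfl
  show g (fun i => k i + if i = j then 1 else 0) - g k = _
  rw [h]
  simp
  ring

lemma hasExp_iterate {F : ((Fin n → ℤ) → ℂ) → ((Fin n → ℤ) → ℂ)} (hF : HasExp F) (m : ℕ) :
    HasExp F^[m] := by
  induction m with
  | zero => exact hasExp_id
  | succ m ih =>
      rw [Function.iterate_succ']
      exact hasExp_comp hF ih

lemma hasExp_foldr (L : List (((Fin n → ℤ) → ℂ) → ((Fin n → ℤ) → ℂ)))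
    (h : ∀ F ∈ L, HasExp F) : HasExp (L.foldr (· ∘ ·) id) := by
  induction L with
  | nil => exact hasExp_id
  | cons F L ih =>
      show HasExp (F ∘ L.foldr (· ∘ ·) id)
      exact hasExp_comp (h F (List.mem_cons_self))
        (ih fun G hG => h G (List.mem_cons_of_mem F hG))

lemma hasExp_fdiffM (α : Fin n → ℕ) :
    ∃ L : List ((Fin n → ℤ) × ℤ), ∀ (g : (Fin n → ℤ) → ℂ) k,
      fdiffM α g k = (L.map fun p => (p.2 : ℂ) * g (k + p.1)).sum := by
  have h : HasExp (fdiffM (M := ℂ) α) := by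
    have e : (fdiffM (M := ℂ) α)
        = (((List.finRange n).map fun j => (fdiff j)^[α j]).foldr (· ∘ ·) id) := rfl
    rw [e]
    apply hasExp_foldr
    intro F hF
    rw [List.mem_map] at hF
    obtain ⟨j, _, rfl⟩ := hF
    exact hasExp_iterate (hasExp_fdiff j) (α j)
  exact h

lemma foldr_id_of_mem {T : Type*} (L : List (T → T)) (h : ∀ F ∈ L, F = id) :
    L.foldr (· ∘ ·) id = id := by
  induction L with
  | nil => rfl
  | cons F L ih =>
      have hF := h F (List.mem_cons_self)
      have hL := ih fun G hG => h G (List.mem_cons_of_mem F hG)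
      show F ∘ (L.foldr (· ∘ ·) id) = id
      rw [hF, hL]
      rfl

lemma fdiffM_zero (g : (Fin n → ℤ) → ℂ) : fdiffM 0 g = g := by
  show (((List.finRange n).map fun j => (fdiff j)^[(0 : Fin n → ℕ) j]).foldr (· ∘ ·) id) g = g
  rw [foldr_id_of_mem]
  · rfl
  · intro F hF
    rw [List.mem_map] at hF
    obtain ⟨j, _, rfl⟩ := hF
    simp

lemma abs_list_sum {ι : Type*} (L : List ι) (f : ι → ℂ) :
    ‖(L.map f).sum‖ ≤ (L.map fun p => ‖f p‖).sum := by
  induction L with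
  | nil => simp
  | cons a L ih =>
      simp only [List.map_cons, List.sum_cons]
      exact le_trans (norm_add_le _ _) (add_le_add le_rfl ih)

end Exp

section Main

variable {Λ : (Fin n → ℤ) → ℝ} {μ0 μ1 μ ρ : ℝ}

/-- The symbol `Δ^α σ`. -/
def sigA (σ : (Fin n → ℤ) → (Fin n → ℝ) → ℂ) (α : Fin n → ℕ) :
    (Fin n → ℤ) → (Fin n → ℝ) → ℂ :=
  fun k y => fdiffM α (fun k' => σ k' y) k

lemma symbDiff_eq (σ : (Fin n → ℤ) → (Fin n → ℝ) → ℂ) (α β : Fin n → ℕ) (k : Fin n → ℤ)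
    (x : Fin n → ℝ) : symbDiff σ α β k x = DM β (sigA σ α k) x := rfl

/-- Uniform rapid decay of all `x`-derivatives. -/
def GoodD (σ : (Fin n → ℤ) → (Fin n → ℝ) → ℂ) : Prop :=
  (∀ k, ContDiff ℝ (⊤ : ℕ∞) (σ k)) ∧
  ∀ (β : Fin n → ℕ) (N : ℕ), ∃ C > 0, ∀ k x,
    ‖DM β (σ k) x‖ ≤ C * (1 + znorm k) ^ (-(N:ℝ))

lemma smooth_sigA {σ : (Fin n → ℤ) → (Fin n → ℝ) → ℂ} (hσ : ∀ k, ContDiff ℝ (⊤ : ℕ∞) (σ k))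
    (α : Fin n → ℕ) (k : Fin n → ℤ) : ContDiff ℝ (⊤ : ℕ∞) (sigA σ α k) := by
  obtain ⟨L, hL⟩ := hasExp_fdiffM (n := n) α
  have e : sigA σ α k = fun y => (L.map fun p => (p.2 : ℂ) * σ (k + p.1) y).sum :=
    funext fun y => hL (fun k' => σ k' y) k
  rw [e]
  exact contDiff_list_sum L _ _ fun p _ => hσ (k + p.1)

lemma allS_to_GoodD (hΛ : IsWeight Λ μ0 μ1 μ) {σ : (Fin n → ℤ) → (Fin n → ℝ) → ℂ}
    (h : ∀ m : ℝ, InS Λ ρ m σ) (α : Fin n → ℕ) : GoodD (sigA σ α) := by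
  refine ⟨smooth_sigA (h 0).1 α, fun β N => ?_⟩
  obtain ⟨m', C2, hC2, hm'⟩ := weight_decay hΛ N
  obtain ⟨C, hC, hB⟩ := (h (m' + ρ * (mlen α : ℝ))).2 α β
  refine ⟨C * C2, by positivity, fun k x => ?_⟩
  have h1 := hB k x
  rw [add_sub_cancel_right] at h1
  rw [← symbDiff_eq]
  calc ‖symbDiff σ α β k x‖ ≤ C * Λ k ^ m' := h1
    _ ≤ C * (C2 * (1 + znorm k) ^ (-(N:ℝ))) := by
        have := hm' k
        gcongr
    _ = C * C2 * (1 + znorm k) ^ (-(N:ℝ)) := by ring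

lemma GoodD_to_S (hΛ : IsWeight Λ μ0 μ1 μ) {σ : (Fin n → ℤ) → (Fin n → ℝ) → ℂ}
    (H : ∀ α, GoodD (sigA σ α)) (m : ℝ) : InS Λ ρ m σ := by
  constructor
  · intro k
    have h := (H 0).1 k
    have e : sigA σ 0 k = σ k := funext fun y => congrFun (fdiffM_zero (fun k' => σ k' y)) k
    rwa [e] at h
  · intro α β
    obtain ⟨N, C1, hC1, hB1⟩ := weight_lower hΛ (m - ρ * (mlen α : ℝ))
    obtain ⟨C, hC, hG⟩ := (H α).2 β N
    refine ⟨C * C1, by positivity, fun k x => ?_⟩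
    rw [symbDiff_eq]
    calc ‖DM β (sigA σ α k) x‖ ≤ C * (1 + znorm k) ^ (-(N:ℝ)) := hG k x
      _ ≤ C * (C1 * Λ k ^ (m - ρ * (mlen α : ℝ))) := by
          have := hB1 k
          gcongr
      _ = C * C1 * Λ k ^ (m - ρ * (mlen α : ℝ)) := by ring

lemma GoodD_tau (σ : (Fin n → ℤ) → (Fin n → ℝ) → ℂ) (γ : Fin n → ℕ)
    (H : GoodD (sigA σ γ)) (α : Fin n → ℕ) :
    GoodD (sigA (fun k x => kpow k γ * fdiffM γ (fun k' => σ k' x) k) α) := by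
  obtain ⟨L, hL⟩ := hasExp_fdiffM (n := n) α
  set τ : (Fin n → ℤ) → (Fin n → ℝ) → ℂ :=
    fun k x => kpow k γ * fdiffM γ (fun k' => σ k' x) k with hτ
  have key : ∀ k, sigA τ α k
      = fun y => (L.map fun p => ((p.2 : ℂ) * kpow (k + p.1) γ) * sigA σ γ (k + p.1) y).sum := by
    intro k
    funext y
    have h0 := hL (fun k' => τ k' y) k
    show fdiffM α (fun k' => τ k' y) k = _
    rw [h0]
    refine congrArg List.sum (List.map_congr_left fun p _ => ?_)
    show (p.2 : ℂ) * (kpow (k + p.1) γ * sigA σ γ (k + p.1) y)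
        = ((p.2 : ℂ) * kpow (k + p.1) γ) * sigA σ γ (k + p.1) y
    ring
  constructor
  · intro k
    rw [key k]
    exact contDiff_list_sum L _ _ fun p _ => H.1 (k + p.1)
  · intro β N
    obtain ⟨C, hC, hB⟩ := H.2 β (N + mlen γ)
    have hCp_nonneg : ∀ p : (Fin n → ℤ) × ℤ,
        (0:ℝ) ≤ |(p.2 : ℝ)| * C * (1 + znorm p.1) ^ ((N:ℝ)) := by
      intro p
      have := one_add_znorm_pos p.1
      positivity
    have hsum0 : 0 ≤ (L.map fun p => |(p.2 : ℝ)| * C * (1 + znorm p.1) ^ ((N:ℝ))).sum := by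
      apply List.sum_nonneg
      intro a ha
      simp only [List.mem_map] at ha
      obtain ⟨p, _, rfl⟩ := ha
      exact hCp_nonneg p
    refine ⟨(L.map fun p => |(p.2 : ℝ)| * C * (1 + znorm p.1) ^ ((N:ℝ))).sum + 1,
      by linarith, fun k x => ?_⟩
    have e2 : DM β (sigA τ α k) x
        = (L.map fun p => ((p.2 : ℂ) * kpow (k + p.1) γ) * DM β (sigA σ γ (k + p.1)) x).sum := by
      rw [key k]
      exact DM_list_sum β L (fun p => (p.2 : ℂ) * kpow (k + p.1) γ)
        (fun p => sigA σ γ (k + p.1)) (fun p _ => H.1 (k + p.1)) x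
    rw [e2]
    have hzk := one_add_znorm_pos k
    calc ‖(L.map fun p =>
            ((p.2 : ℂ) * kpow (k + p.1) γ) * DM β (sigA σ γ (k + p.1)) x).sum‖
        ≤ (L.map fun p => ‖((p.2 : ℂ) * kpow (k + p.1) γ) * DM β (sigA σ γ (k + p.1)) x‖).sum :=
          abs_list_sum L _
      _ ≤ (L.map fun p => (|(p.2 : ℝ)| * C * (1 + znorm p.1) ^ ((N:ℝ)))
            * (1 + znorm k) ^ (-(N:ℝ))).sum := by
          apply List.sum_le_sum
          intro p _
          have hz' := one_add_znorm_pos (k + p.1)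
          have h1 : ‖((p.2 : ℂ) * kpow (k + p.1) γ) * DM β (sigA σ γ (k + p.1)) x‖
              = |(p.2 : ℝ)| * (‖kpow (k + p.1) γ‖
                * ‖DM β (sigA σ γ (k + p.1)) x‖) := by
            rw [norm_mul, norm_mul, Complex.norm_intCast, mul_assoc]
          rw [h1]
          have h2 : ‖kpow (k + p.1) γ‖ * ‖DM β (sigA σ γ (k + p.1)) x‖
              ≤ (1 + znorm (k + p.1)) ^ ((mlen γ : ℕ) : ℝ)
                * (C * (1 + znorm (k + p.1)) ^ (-((N + mlen γ : ℕ) : ℝ))) :=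
            mul_le_mul (abs_kpow_le _ _) (hB (k + p.1) x) (norm_nonneg _)
              (by positivity)
          have h3 : (1 + znorm (k + p.1)) ^ ((mlen γ : ℕ) : ℝ)
                * (C * (1 + znorm (k + p.1)) ^ (-((N + mlen γ : ℕ) : ℝ)))
              = C * (1 + znorm (k + p.1)) ^ (-(N:ℝ)) := by
            rw [mul_left_comm, ← Real.rpow_add hz']
            congr 2
            push_cast
            ring
          have h4 : C * (1 + znorm (k + p.1)) ^ (-(N:ℝ))
              ≤ C * ((1 + znorm p.1) ^ ((N:ℝ)) * (1 + znorm k) ^ (-(N:ℝ))) := by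
            have := decay_translate N k p.1
            gcongr
          have h5 : ‖kpow (k + p.1) γ‖ * ‖DM β (sigA σ γ (k + p.1)) x‖
              ≤ C * ((1 + znorm p.1) ^ ((N:ℝ)) * (1 + znorm k) ^ (-(N:ℝ))) := by
            rw [← h3] at h4
            exact h2.trans h4
          calc |(p.2 : ℝ)| * (‖kpow (k + p.1) γ‖
                  * ‖DM β (sigA σ γ (k + p.1)) x‖)
              ≤ |(p.2 : ℝ)| * (C * ((1 + znorm p.1) ^ ((N:ℝ)) * (1 + znorm k) ^ (-(N:ℝ)))) :=
                mul_le_mul_of_nonneg_left h5 (abs_nonneg _)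
            _ = (|(p.2 : ℝ)| * C * (1 + znorm p.1) ^ ((N:ℝ))) * (1 + znorm k) ^ (-(N:ℝ)) := by
                ring
      _ = (L.map fun p => |(p.2 : ℝ)| * C * (1 + znorm p.1) ^ ((N:ℝ))).sum
            * (1 + znorm k) ^ (-(N:ℝ)) := List.sum_map_mul_right _ _ _
      _ ≤ ((L.map fun p => |(p.2 : ℝ)| * C * (1 + znorm p.1) ^ ((N:ℝ))).sum + 1)
            * (1 + znorm k) ^ (-(N:ℝ)) := by
          have : (0:ℝ) < (1 + znorm k) ^ (-(N:ℝ)) := Real.rpow_pos_of_pos hzk _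
          nlinarith

end Main

theorem smoothing_intersections_coincide (Λ : (Fin n → ℤ) → ℝ) (μ0 μ1 μ ρ : ℝ)
    (hΛ : IsWeight Λ μ0 μ1 μ) (hρ : 0 < ρ) (hρμ : ρ ≤ 1 / μ)
    (σ : (Fin n → ℤ) → (Fin n → ℝ) → ℂ) :
    (∀ m : ℝ, InM Λ ρ m σ) ↔ (∀ m : ℝ, InS Λ ρ m σ) := by
  constructor
  · intro h m
    have h0 := h m 0 fun j => Nat.zero_le 1
    have e : (fun k x => kpow k 0 * fdiffM 0 (fun k' => σ k' x) k) = σ := by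
      funext k x
      rw [congrFun (fdiffM_zero (fun k' => σ k' x)) k]
      have : kpow k 0 = 1 := by
        simp [kpow]
      rw [this, one_mul]
    rwa [e] at h0
  · intro h m γ hγ
    have HA : ∀ α, GoodD (sigA σ α) := fun α => allS_to_GoodD hΛ h α
    have HT : ∀ α, GoodD (sigA (fun k x => kpow k γ * fdiffM γ (fun k' => σ k' x) k) α) :=
      fun α => GoodD_tau σ γ (HA γ) α
    exact GoodD_to_S hΛ HT m

end
end
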